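/- arXiv:2504.08649 — 11 statements merged into one kernel-verified Lean document; each statement's English description precedes it below -/
import Mathlib

section
/- Let G be a countable abelian group such that the subgroup 2G has finite index ℓ, with coset representatives g₁,...,g_ℓ so that G is the disjoint union of the cosets 2G + gᵢ. For any subset A ⊆ G, the following are equivalent: (1) A contains B + B for some infinite set B ⊆ G; (2) A ∩ 2G contains B + B for some infinite set B ⊆ G; (3) (A ∩ 2G) ∪ (G \ 2G) contains B + B for some infinite set B ⊆ G. -/
open Filter Pointwise
open scoped Classical

/-- The doubling map `g ↦ g + g` as an additive homomorphism. -/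
def doubleHom (G : Type*) [AddCommGroup G] : G →+ G where
  toFun g := g + g
  map_zero' := by simp
  map_add' := by intro a b; abel

/-- The subgroup `2G = {g + g : g ∈ G}`. -/
def twoG (G : Type*) [AddCommGroup G] : AddSubgroup G := (doubleHom G).range

/-- A Følner sequence: finite sets with `|Φ_N ∩ (g + Φ_N)|/|Φ_N| → 1` for every `g`. -/
def IsFolner {G : Type*} [AddCommGroup G] (Φ : ℕ → Finset G) : Prop :=
  ∀ g : G, Tendsto
    (fun N => (((Φ N) ∩ (Φ N).image (fun x => g + x)).card : ℝ) / ((Φ N).card : ℝ))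
    atTop (nhds 1)

theorem stmt1 (G : Type*) [AddCommGroup G] [Countable G] (ℓ : ℕ) (g : Fin ℓ → G)
    (hcover : ∀ x : G, ∃! i : Fin ℓ, x - g i ∈ twoG G) (A : Set G) :
    ((∃ B : Set G, B.Infinite ∧ B + B ⊆ A) ↔
      (∃ B : Set G, B.Infinite ∧ B + B ⊆ A ∩ (twoG G : Set G))) ∧
    ((∃ B : Set G, B.Infinite ∧ B + B ⊆ A ∩ (twoG G : Set G)) ↔
      (∃ B : Set G, B.Infinite ∧ B + B ⊆ (A ∩ (twoG G : Set G)) ∪ ((twoG G : Set G)ᶜ))) := by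
  -- Key: from any infinite B we can extract an infinite B' ⊆ B with B' + B' ⊆ 2G.
  have key : ∀ B : Set G, B.Infinite → ∃ B' : Set G, B'.Infinite ∧ B' ⊆ B ∧
      B' + B' ⊆ (twoG G : Set G) := by
    intro B hB
    have hcov : B ⊆ ⋃ i : Fin ℓ, {x ∈ B | x - g i ∈ twoG G} := by
      intro x hx
      obtain ⟨i, hi, -⟩ := hcover x
      exact Set.mem_iUnion.2 ⟨i, hx, hi⟩
    have : ∃ i : Fin ℓ, {x ∈ B | x - g i ∈ twoG G}.Infinite := by
      by_contra h
      push_neg at h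
      exact hB ((Set.finite_iUnion h).subset hcov)
    obtain ⟨i, hi⟩ := this
    refine ⟨_, hi, fun x hx => hx.1, ?_⟩
    rintro z ⟨x, hx, y, hy, rfl⟩
    have hgi : g i + g i ∈ twoG G := ⟨g i, rfl⟩
    have := add_mem (add_mem hx.2 hy.2) hgi
    have heq : x - g i + (y - g i) + (g i + g i) = x + y := by abel
    rwa [heq] at this
  constructor
  · constructor
    · rintro ⟨B, hB, hBA⟩
      obtain ⟨B', hB', hsub, h2⟩ := key B hB
      exact ⟨B', hB', fun z hz => ⟨hBA (Set.add_subset_add hsub hsub hz), h2 hz⟩⟩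
    · rintro ⟨B, hB, hBA⟩
      exact ⟨B, hB, fun z hz => (hBA hz).1⟩
  · constructor
    · rintro ⟨B, hB, hBA⟩
      exact ⟨B, hB, fun z hz => Or.inl (hBA hz)⟩
    · rintro ⟨B, hB, hBA⟩
      obtain ⟨B', hB', hsub, h2⟩ := key B hB
      refine ⟨B', hB', fun z hz => ?_⟩
      have hz2 := h2 hz
      rcases hBA (Set.add_subset_add hsub hsub hz) with h | h
      · exact h
      · exact absurd hz2 h
end

section
/- Let G be a countable abelian group with [G : 2G] = ℓ < ∞ and coset representatives g₁,...,g_ℓ of 2G. For any A ⊆ G, the following are equivalent: (1) A contains t + B + B for some t ∈ G and infinite B ⊆ G; (2) A contains B + B + gᵢ for some i ∈ {1,...,ℓ} and infinite B ⊆ G; (3) (A − gᵢ) ∩ 2G contains B + B for some i ∈ {1,...,ℓ} and infinite B ⊆ G. -/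
open Filter Pointwise
open scoped Classical

theorem stmt2 (G : Type*) [AddCommGroup G] [Countable G] (ℓ : ℕ) (g : Fin ℓ → G)
    (hcover : ∀ x : G, ∃! i : Fin ℓ, x - g i ∈ twoG G) (A : Set G) :
    ((∃ t : G, ∃ B : Set G, B.Infinite ∧ ({t} : Set G) + B + B ⊆ A) ↔
      (∃ i : Fin ℓ, ∃ B : Set G, B.Infinite ∧ B + B + ({g i} : Set G) ⊆ A)) ∧
    ((∃ i : Fin ℓ, ∃ B : Set G, B.Infinite ∧ B + B + ({g i} : Set G) ⊆ A) ↔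
      (∃ i : Fin ℓ, ∃ B : Set G, B.Infinite ∧
        B + B ⊆ {x : G | x + g i ∈ A} ∩ (twoG G : Set G))) := by
  constructor
  · constructor
    · rintro ⟨t, B, hB, hsub⟩
      obtain ⟨b₀, hb₀⟩ := hB.nonempty
      obtain ⟨i, hi, -⟩ := hcover (t + (b₀ + b₀))
      obtain ⟨s, hs⟩ := hi
      have hs' : s + s = t + (b₀ + b₀) - g i := hs
      refine ⟨i, (fun b => s + b - b₀) '' B, hB.image ?_, ?_⟩
      · intro x _ y _ h
        have : s + x = s + y := by
          have := sub_left_inj.mp h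
          exact this
        exact add_left_cancel this
      · rintro x hx
        simp only [Set.mem_add, Set.mem_image, Set.mem_singleton_iff] at hx
        obtain ⟨y, ⟨u, ⟨b₁, hb₁, rfl⟩, v, ⟨b₂, hb₂, rfl⟩, rfl⟩, w, rfl, rfl⟩ := hx
        have key : (s + b₁ - b₀) + (s + b₂ - b₀) + g i = t + b₁ + b₂ := by
          calc (s + b₁ - b₀) + (s + b₂ - b₀) + g i
              = (s + s) + b₁ + b₂ - (b₀ + b₀) + g i := by abel
            _ = t + b₁ + b₂ := by rw [hs']; abel
        rw [key]
        exact hsub (Set.add_mem_add (Set.add_mem_add (Set.mem_singleton t) hb₁) hb₂)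
    · rintro ⟨i, B, hB, hsub⟩
      refine ⟨g i, B, hB, ?_⟩
      rintro x hx
      simp only [Set.mem_add, Set.mem_singleton_iff] at hx
      obtain ⟨y, ⟨u, rfl, b₁, hb₁, rfl⟩, b₂, hb₂, rfl⟩ := hx
      have key : g i + b₁ + b₂ = b₁ + b₂ + g i := by abel_nf
      rw [key]
      exact hsub (Set.add_mem_add (Set.add_mem_add hb₁ hb₂) (Set.mem_singleton _))
  · constructor
    · rintro ⟨i, B, hB, hsub⟩
      haveI := hB.to_subtype
      set f : G → Fin ℓ := fun x => (hcover x).choose with hf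
      obtain ⟨j, hj⟩ := Finite.exists_infinite_fiber (fun b : B => f b.1)
      set B' : Set G := {b ∈ B | f b = j} with hB'
      have hB'inf : B'.Infinite := by
        rw [Set.infinite_coe_iff.symm]
        refine Infinite.of_injective
          (fun x : ((fun b : B => f b.1) ⁻¹' {j}) => (⟨x.1.1, x.1.2, x.2⟩ : B')) ?_
        rintro ⟨⟨a, ha⟩, ha'⟩ ⟨⟨b, hb⟩, hb'⟩ h
        simp only [Subtype.mk.injEq] at h ⊢
        exact h
      have hmem : ∀ b ∈ B', b - g j ∈ twoG G := fun b hb => by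
        have h := (hcover b).choose_spec.1
        have hb2 : (hcover b).choose = j := hb.2
        rwa [hb2] at h
      refine ⟨i, B', hB'inf, ?_⟩
      rintro x hx
      simp only [Set.mem_add] at hx
      obtain ⟨b₁, hb₁, b₂, hb₂, rfl⟩ := hx
      constructor
      · exact hsub (Set.add_mem_add (Set.add_mem_add hb₁.1 hb₂.1) (Set.mem_singleton _))
      · have h1 := hmem b₁ hb₁
        have h2 := hmem b₂ hb₂
        have h3 : doubleHom G (g j) ∈ twoG G := ⟨g j, rfl⟩
        have key : b₁ + b₂ = (b₁ - g j) + (b₂ - g j) + doubleHom G (g j) := by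
          show b₁ + b₂ = (b₁ - g j) + (b₂ - g j) + (g j + g j)
          abel
        rw [key]
        exact AddSubgroup.add_mem _ (AddSubgroup.add_mem _ h1 h2) h3
    · rintro ⟨i, B, hB, hsub⟩
      refine ⟨i, B, hB, ?_⟩
      rintro x hx
      simp only [Set.mem_add, Set.mem_singleton_iff] at hx
      obtain ⟨y, ⟨b₁, hb₁, b₂, hb₂, rfl⟩, w, rfl, rfl⟩ := hx
      exact (hsub (Set.add_mem_add hb₁ hb₂)).1
end

section
/- Let Φ and Ψ be Følner sequences in a countable abelian group G. If lim inf |Ψ_N|/|Φ_N| > 0, lim sup |Ψ_N|/|Φ_N| < ∞, and lim inf |Φ_N ∩ Ψ_N| / |Ψ_N| > 0, then N ↦ Φ_N ∩ Ψ_N is also a Følner sequence in G. -/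
/-! Translation by `g` is injective, so the points of `Φ_N ∩ Ψ_N` outside `g + (Φ_N ∩ Ψ_N)` lie
outside `g + Φ_N` or outside `g + Ψ_N`; hence the defect `|S \ (g + S)|` of the intersection is at
most the sum of the defects of `Φ_N` and `Ψ_N`. The density hypotheses give `|Φ_N ∩ Ψ_N| ≥ a |Φ_N|`
and `|Φ_N ∩ Ψ_N| ≥ b |Ψ_N|` eventually, so the relative defect of the intersection is at most
`1/a` times that of `Φ_N` plus `1/b` times that of `Ψ_N`, and both tend to `0`. -/

open Filter Pointwise
open scoped Classical

open Finset

namespace Finset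

variable {α : Type*}

theorem card_sdiff_image_inter_le (f : α → α) (hf : Function.Injective f) (s t : Finset α) :
    #((s ∩ t) \ (s ∩ t).image f) ≤ #(s \ s.image f) + #(t \ t.image f) := by
  rw [image_inter _ _ hf, sdiff_inter_distrib_right]
  refine (card_le_card (union_subset_union ?_ ?_)).trans (card_union_le _ _)
  · exact sdiff_subset_sdiff inter_subset_left subset_rfl
  · exact sdiff_subset_sdiff inter_subset_right subset_rfl

theorem card_inter_div_card_eq_one_sub (s t : Finset α) (hs : s.Nonempty) :
    (#(s ∩ t) : ℝ) / #s = 1 - #(s \ t) / #s := by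
  rw [eq_sub_iff_add_eq, ← add_div, ← Nat.cast_add, card_inter_add_card_sdiff,
    div_self (by positivity)]

end Finset

theorem exists_pos_eventually_mul_le_of_liminf_div_pos {x y : ℕ → ℕ}
    (h : 0 < liminf (fun N => (x N : ℝ) / y N) atTop) :
    ∃ c : ℝ, 0 < c ∧ ∀ᶠ N in atTop, c * y N ≤ x N := by
  refine ⟨_, half_pos h, ?_⟩
  filter_upwards [eventually_lt_of_lt_liminf (half_lt_self h)
    (isBoundedUnder_of ⟨0, fun N => by positivity⟩)] with N hN
  -- `hN` rules out `y N = 0`, where the quotient is the junk value `0`.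
  have hy : 0 < y N := Nat.pos_of_ne_zero fun hy => by simp [hy] at hN; linarith
  exact ((lt_div_iff₀ (by exact_mod_cast hy)).mp hN).le

section

variable {G : Type*} [AddCommGroup G]

theorem isFolner_iff_tendsto_card_sdiff_div {Φ : ℕ → Finset G} :
    IsFolner Φ ↔ (∀ᶠ N in atTop, (Φ N).Nonempty) ∧
      ∀ g : G, Tendsto (fun N => (#(Φ N \ (Φ N).image (g + ·)) : ℝ) / #(Φ N)) atTop (nhds 0) := by
  constructor
  · intro hΦ
    have hne : ∀ᶠ N in atTop, (Φ N).Nonempty := by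
      filter_upwards [(hΦ 0).eventually (lt_mem_nhds one_pos)] with N hN
      by_contra h
      simp [not_nonempty_iff_eq_empty.mp h] at hN
    refine ⟨hne, fun g => ?_⟩
    have := (tendsto_const_nhds (x := (1 : ℝ))).sub (hΦ g)
    rw [sub_self] at this
    refine this.congr' ?_
    filter_upwards [hne] with N hN
    rw [Finset.card_inter_div_card_eq_one_sub _ _ hN, sub_sub_cancel]
  · rintro ⟨hne, hΦ⟩ g
    have := (tendsto_const_nhds (x := (1 : ℝ))).sub (hΦ g)
    rw [sub_zero] at this
    refine this.congr' ?_
    filter_upwards [hne] with N hN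
    rw [Finset.card_inter_div_card_eq_one_sub _ _ hN]

theorem IsFolner.inter {Φ Ψ : ℕ → Finset G} (hΦ : IsFolner Φ) (hΨ : IsFolner Ψ) {a b : ℝ}
    (ha : 0 < a) (hb : 0 < b) (haΦ : ∀ᶠ N in atTop, a * #(Φ N) ≤ #(Φ N ∩ Ψ N))
    (hbΨ : ∀ᶠ N in atTop, b * #(Ψ N) ≤ #(Φ N ∩ Ψ N)) :
    IsFolner (fun N => Φ N ∩ Ψ N) := by
  rw [isFolner_iff_tendsto_card_sdiff_div] at hΦ hΨ ⊢
  obtain ⟨hΦne, hΦ⟩ := hΦ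
  obtain ⟨hΨne, hΨ⟩ := hΨ
  have hpos : ∀ᶠ N in atTop, 0 < (#(Φ N) : ℝ) ∧ 0 < (#(Ψ N) : ℝ) ∧ 0 < (#(Φ N ∩ Ψ N) : ℝ) := by
    filter_upwards [hΦne, hΨne, haΦ] with N hΦN hΨN haN
    have hΦN : 0 < (#(Φ N) : ℝ) := by simpa using hΦN.card_pos
    exact ⟨hΦN, by simpa using hΨN.card_pos, (mul_pos ha hΦN).trans_le haN⟩
  refine ⟨hpos.mono fun N hN => by simpa using hN.2.2, fun g => ?_⟩
  have hbound := ((hΦ g).div_const a).add ((hΨ g).div_const b)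
  rw [zero_div, zero_div, add_zero] at hbound
  refine tendsto_of_tendsto_of_tendsto_of_le_of_le' tendsto_const_nhds hbound
    (Eventually.of_forall fun N => by positivity) ?_
  filter_upwards [hpos, haΦ, hbΨ] with N ⟨hΦN, hΨN, hN⟩ haN hbN
  have hcard := card_sdiff_image_inter_le (g + ·) (add_right_injective g) (Φ N) (Ψ N)
  calc (#((Φ N ∩ Ψ N) \ (Φ N ∩ Ψ N).image (g + ·)) : ℝ) / #(Φ N ∩ Ψ N)
      ≤ #(Φ N \ (Φ N).image (g + ·)) / #(Φ N ∩ Ψ N)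
        + #(Ψ N \ (Ψ N).image (g + ·)) / #(Φ N ∩ Ψ N) := by
        rw [← add_div]; gcongr; exact_mod_cast hcard
    _ ≤ #(Φ N \ (Φ N).image (g + ·)) / (a * #(Φ N))
        + #(Ψ N \ (Ψ N).image (g + ·)) / (b * #(Ψ N)) := by gcongr
    _ = _ := by rw [div_div, div_div, mul_comm a, mul_comm b]

end

theorem stmt6_general (G : Type*) [AddCommGroup G] (Φ Ψ : ℕ → Finset G)
    (hΦ : IsFolner Φ) (hΨ : IsFolner Ψ)
    (h1 : 0 < Filter.liminf (fun N => ((Ψ N).card : ℝ) / ((Φ N).card : ℝ)) atTop)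
    (h3 : 0 < Filter.liminf (fun N => ((Φ N ∩ Ψ N).card : ℝ) / ((Ψ N).card : ℝ)) atTop) :
    IsFolner (fun N => Φ N ∩ Ψ N) := by
  obtain ⟨c, hc, hcΦ⟩ := exists_pos_eventually_mul_le_of_liminf_div_pos h1
  obtain ⟨d, hd, hdΨ⟩ := exists_pos_eventually_mul_le_of_liminf_div_pos h3
  refine hΦ.inter hΨ (mul_pos hd hc) hd ?_ hdΨ
  filter_upwards [hcΦ, hdΨ] with N hN hN'
  calc d * c * #(Φ N) = d * (c * #(Φ N)) := mul_assoc _ _ _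
    _ ≤ d * #(Ψ N) := by gcongr
    _ ≤ _ := hN'

theorem stmt6 (G : Type*) [AddCommGroup G] [Countable G] (Φ Ψ : ℕ → Finset G)
    (hΦ : IsFolner Φ) (hΨ : IsFolner Ψ)
    (h1 : 0 < Filter.liminf (fun N => ((Ψ N).card : ℝ) / ((Φ N).card : ℝ)) atTop)
    (h2 : IsBoundedUnder (· ≤ ·) atTop (fun N => ((Ψ N).card : ℝ) / ((Φ N).card : ℝ)))
    (h3 : 0 < Filter.liminf (fun N => ((Φ N ∩ Ψ N).card : ℝ) / ((Ψ N).card : ℝ)) atTop) :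
    IsFolner (fun N => Φ N ∩ Ψ N) :=
  stmt6_general G Φ Ψ hΦ hΨ h1 h3
end

section
/- Let G be a countable abelian group with |ker(D)| = r < ∞ where D(g) = 2g, and let Ψ be a Følner sequence in G. Then |{g ∈ Ψ_N : g + ker(D) ⊆ Ψ_N}| / |Ψ_N| → 1 as N → ∞, and consequently |2Ψ_N| / |Ψ_N| → 1/r as N → ∞. -/
open Filter Pointwise
open scoped Classical

theorem stmt8 (G : Type*) [AddCommGroup G] [Countable G] (r : ℕ) (hr : 0 < r)
    (hker : Nat.card (doubleHom G).ker = r)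
    (Ψ : ℕ → Finset G) (hΨ : IsFolner Ψ) :
    Tendsto (fun N =>
        (((Ψ N).filter (fun x => ∀ k : G, k + k = 0 → x + k ∈ Ψ N)).card : ℝ) /
          ((Ψ N).card : ℝ)) atTop (nhds 1) ∧
    Tendsto (fun N =>
        (((Ψ N).image (fun x => x + x)).card : ℝ) / ((Ψ N).card : ℝ)) atTop
      (nhds (1 / (r : ℝ))) := by
  classical
  -- the kernel as a finite set
  have hfinker : Finite (doubleHom G).ker := Nat.finite_of_card_ne_zero (by omega)
  have hfin : ((doubleHom G).ker : Set G).Finite := Set.toFinite _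
  set K : Finset G := hfin.toFinset with hKdef
  have hKmem : ∀ k : G, k ∈ K ↔ k + k = 0 := by
    intro k
    simp only [hKdef, Set.Finite.mem_toFinset, SetLike.mem_coe, AddMonoidHom.mem_ker]
    rfl
  have hKcard : K.card = r := by
    rw [← hker]
    have h1 : Nat.card ((doubleHom G).ker) = ((doubleHom G).ker : Set G).ncard :=
      Nat.card_coe_set_eq _
    rw [h1, Set.ncard_eq_toFinset_card _ hfin]
  -- the "good" sets
  set B : ℕ → Finset G := fun N =>
    (Ψ N).filter (fun x => ∀ k : G, k + k = 0 → x + k ∈ Ψ N) with hBdef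
  set A : G → ℕ → Finset G := fun k N => (Ψ N).filter (fun x => x + k ∈ Ψ N) with hAdef
  -- Folner sets eventually nonempty
  have he : ∀ᶠ N in atTop, (Ψ N).card ≠ 0 := by
    have h0 := (hΨ 0).eventually (eventually_gt_nhds (by norm_num : (1:ℝ)/2 < 1))
    filter_upwards [h0] with N hN hcard
    rw [hcard] at hN
    simp at hN
    linarith
  -- the Folner condition for each kernel element
  have hA : ∀ k : G, Tendsto (fun N => ((A k N).card : ℝ) / ((Ψ N).card : ℝ))
      atTop (nhds 1) := by
    intro k
    have hEq : ∀ N, (Ψ N) ∩ (Ψ N).image (fun x => (-k) + x) = A k N := by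
      intro N
      ext x
      simp only [hAdef, Finset.mem_inter, Finset.mem_image, Finset.mem_filter]
      constructor
      · rintro ⟨hx, y, hy, rfl⟩
        refine ⟨hx, ?_⟩
        have : -k + y + k = y := by abel
        rwa [this]
      · rintro ⟨hx, hxk⟩
        exact ⟨hx, ⟨x + k, hxk, by abel⟩⟩
    have := hΨ (-k)
    simpa only [hEq] using this
  -- Part 1
  have hB1 : Tendsto (fun N => ((B N).card : ℝ) / ((Ψ N).card : ℝ)) atTop (nhds 1) := by
    have hLtend : Tendsto (fun N => 1 - ∑ k ∈ K, (1 - ((A k N).card : ℝ) / ((Ψ N).card : ℝ)))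
        atTop (nhds 1) := by
      have hsum : Tendsto (fun N => ∑ k ∈ K, (1 - ((A k N).card : ℝ) / ((Ψ N).card : ℝ)))
          atTop (nhds 0) := by
        have : Tendsto (fun N => ∑ k ∈ K, (1 - ((A k N).card : ℝ) / ((Ψ N).card : ℝ)))
            atTop (nhds (∑ k ∈ K, (0:ℝ))) :=
          tendsto_finset_sum _ (fun k _ => by
            simpa using (tendsto_const_nhds (x := (1:ℝ))).sub (hA k))
        simpa using this
      simpa using (tendsto_const_nhds (x := (1:ℝ))).sub hsum
    refine tendsto_of_tendsto_of_tendsto_of_le_of_le' hLtend tendsto_const_nhds ?_ ?_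
    · -- lower bound
      filter_upwards [he] with N hN
      have hn : (0:ℝ) < ((Ψ N).card : ℝ) := by positivity
      -- key combinatorial inequality
      have hsub : Ψ N \ B N ⊆ K.biUnion (fun k => Ψ N \ A k N) := by
        intro x hx
        rw [Finset.mem_sdiff] at hx
        obtain ⟨hxΨ, hxB⟩ := hx
        rw [hBdef] at hxB
        simp only [Finset.mem_filter, not_and] at hxB
        push_neg at hxB
        obtain ⟨k, hk0, hk⟩ := hxB hxΨ
        refine Finset.mem_biUnion.2 ⟨k, (hKmem k).2 hk0, ?_⟩
        rw [Finset.mem_sdiff]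
        refine ⟨hxΨ, ?_⟩
        simp only [hAdef, Finset.mem_filter, not_and]
        exact fun _ => hk
      have hkey : ((Ψ N \ B N).card : ℝ) ≤ ∑ k ∈ K, ((Ψ N \ A k N).card : ℝ) := by
        have := (Finset.card_le_card hsub).trans (Finset.card_biUnion_le)
        exact_mod_cast this
      have eB : ((Ψ N \ B N).card : ℝ) = ((Ψ N).card : ℝ) - ((B N).card : ℝ) := by
        rw [Finset.card_sdiff_of_subset (Finset.filter_subset _ _)]
        have := Finset.card_le_card (Finset.filter_subset
          (fun x => ∀ k : G, k + k = 0 → x + k ∈ Ψ N) (Ψ N))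
        push_cast [Nat.cast_sub this]
        ring
      have eA : ∀ k ∈ K, ((Ψ N \ A k N).card : ℝ)
          = ((Ψ N).card : ℝ) - ((A k N).card : ℝ) := by
        intro k _
        rw [Finset.card_sdiff_of_subset (Finset.filter_subset _ _)]
        have := Finset.card_le_card (Finset.filter_subset
          (fun x => x + k ∈ Ψ N) (Ψ N))
        push_cast [Nat.cast_sub this]
        ring
      rw [eB, Finset.sum_congr rfl eA] at hkey
      have hdiv : (((Ψ N).card : ℝ) - ((B N).card : ℝ)) / ((Ψ N).card : ℝ)
          ≤ (∑ k ∈ K, (((Ψ N).card : ℝ) - ((A k N).card : ℝ))) / ((Ψ N).card : ℝ) := by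
        gcongr
      rw [sub_div, div_self hn.ne', Finset.sum_div] at hdiv
      have hterm : ∀ k ∈ K, (((Ψ N).card : ℝ) - ((A k N).card : ℝ)) / ((Ψ N).card : ℝ)
          = 1 - ((A k N).card : ℝ) / ((Ψ N).card : ℝ) := by
        intro k _
        rw [sub_div, div_self hn.ne']
      rw [Finset.sum_congr rfl hterm] at hdiv
      linarith
    · -- upper bound
      filter_upwards [he] with N hN
      have hn : (0:ℝ) < ((Ψ N).card : ℝ) := by positivity
      rw [div_le_one hn]
      exact_mod_cast Finset.card_le_card (Finset.filter_subset _ _)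
  refine ⟨hB1, ?_⟩
  -- Part 2
  -- closure of B under the kernel
  have hBclosed : ∀ N, ∀ x ∈ B N, ∀ k : G, k + k = 0 → x + k ∈ B N := by
    intro N x hx k hk
    rw [hBdef, Finset.mem_filter] at hx ⊢
    obtain ⟨hxΨ, hxall⟩ := hx
    refine ⟨hxall k hk, ?_⟩
    intro k' hk'
    have hkk' : (k + k') + (k + k') = 0 := by
      have : (k + k') + (k + k') = (k + k) + (k' + k') := by abel
      rw [this, hk, hk', add_zero]
    have := hxall (k + k') hkk'
    have heq : x + (k + k') = x + k + k' := by abel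
    rwa [heq] at this
  -- the fibers of doubling on B
  have hfiber : ∀ N, ∀ x ∈ B N,
      (B N).filter (fun z => z + z = x + x) = K.image (fun k => x + k) := by
    intro N x hx
    ext z
    simp only [Finset.mem_filter, Finset.mem_image]
    constructor
    · rintro ⟨hzB, hzz⟩
      refine ⟨-x + z, (hKmem _).2 ?_, by abel⟩
      have : (-x + z) + (-x + z) = (z + z) - (x + x) := by abel
      rw [this, hzz, sub_self]
    · rintro ⟨k, hkK, rfl⟩
      have hk0 := (hKmem k).1 hkK
      refine ⟨hBclosed N x hx k hk0, ?_⟩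
      have : (x + k) + (x + k) = (x + x) + (k + k) := by abel
      rw [this, hk0, add_zero]
  -- |B N| = r * |image|
  have hcardB : ∀ N, (B N).card = r * ((B N).image (fun x => x + x)).card := by
    intro N
    rw [Finset.card_eq_sum_card_image (fun x => x + x) (B N)]
    rw [Finset.sum_congr rfl (fun y hy => ?_), Finset.sum_const, smul_eq_mul, mul_comm]
    obtain ⟨x, hxB, rfl⟩ := Finset.mem_image.1 hy
    show ((B N).filter (fun z => z + z = x + x)).card = r
    rw [hfiber N x hxB, Finset.card_image_of_injective _ (add_right_injective x), hKcard]
  -- image bounds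
  have himg_le : ∀ N, ((Ψ N).image (fun x => x + x)).card
      ≤ ((B N).image (fun x => x + x)).card + (Ψ N \ B N).card := by
    intro N
    have hsub : (Ψ N).image (fun x => x + x)
        ⊆ (B N).image (fun x => x + x) ∪ (Ψ N \ B N).image (fun x => x + x) := by
      rw [← Finset.image_union]
      apply Finset.image_subset_image
      intro x hx
      rw [Finset.mem_union, Finset.mem_sdiff]
      by_cases hxB : x ∈ B N
      · exact Or.inl hxB
      · exact Or.inr ⟨hx, hxB⟩
    calc ((Ψ N).image (fun x => x + x)).card
        ≤ ((B N).image (fun x => x + x) ∪ (Ψ N \ B N).image (fun x => x + x)).card :=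
          Finset.card_le_card hsub
      _ ≤ ((B N).image (fun x => x + x)).card + ((Ψ N \ B N).image (fun x => x + x)).card :=
          Finset.card_union_le _ _
      _ ≤ ((B N).image (fun x => x + x)).card + (Ψ N \ B N).card :=
          Nat.add_le_add_left Finset.card_image_le _
  have himg_ge : ∀ N, ((B N).image (fun x => x + x)).card
      ≤ ((Ψ N).image (fun x => x + x)).card :=
    fun N => Finset.card_le_card (Finset.image_subset_image (Finset.filter_subset _ _))
  -- squeeze
  have hrpos : (0:ℝ) < (r : ℝ) := by exact_mod_cast hr
  have hlow : Tendsto (fun N => (((B N).card : ℝ) / ((Ψ N).card : ℝ)) / (r : ℝ))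
      atTop (nhds (1 / (r : ℝ))) := hB1.div_const _
  have hup : Tendsto (fun N => (((B N).card : ℝ) / ((Ψ N).card : ℝ)) / (r : ℝ)
      + (1 - ((B N).card : ℝ) / ((Ψ N).card : ℝ))) atTop (nhds (1 / (r : ℝ))) := by
    have := (hB1.div_const (r:ℝ)).add (tendsto_const_nhds (x := (1:ℝ)).sub hB1)
    simpa using this
  refine tendsto_of_tendsto_of_tendsto_of_le_of_le' hlow hup ?_ ?_
  · filter_upwards [he] with N hN
    have hn : (0:ℝ) < ((Ψ N).card : ℝ) := by positivity
    have h1 : (((B N).image (fun x => x + x)).card : ℝ) = ((B N).card : ℝ) / (r : ℝ) := by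
      rw [eq_div_iff hrpos.ne']
      have := hcardB N
      push_cast [this]
      ring
    have h2 : (((B N).image (fun x => x + x)).card : ℝ)
        ≤ (((Ψ N).image (fun x => x + x)).card : ℝ) := by exact_mod_cast himg_ge N
    have key : (((B N).card : ℝ) / ((Ψ N).card : ℝ)) / (r : ℝ)
        = (((B N).image (fun x => x + x)).card : ℝ) / ((Ψ N).card : ℝ) := by
      rw [h1]; ring
    rw [key]
    gcongr
  · filter_upwards [he] with N hN
    have hn : (0:ℝ) < ((Ψ N).card : ℝ) := by positivity
    have h1 : (((B N).image (fun x => x + x)).card : ℝ) = ((B N).card : ℝ) / (r : ℝ) := by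
      rw [eq_div_iff hrpos.ne']
      have := hcardB N
      push_cast [this]
      ring
    have h2 : (((Ψ N).image (fun x => x + x)).card : ℝ)
        ≤ ((B N).card : ℝ) / (r : ℝ) + (((Ψ N).card : ℝ) - ((B N).card : ℝ)) := by
      have := himg_le N
      have eB : ((Ψ N \ B N).card : ℝ) = ((Ψ N).card : ℝ) - ((B N).card : ℝ) := by
        rw [Finset.card_sdiff_of_subset (Finset.filter_subset _ _)]
        have := Finset.card_le_card (Finset.filter_subset
          (fun x => ∀ k : G, k + k = 0 → x + k ∈ Ψ N) (Ψ N))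
        push_cast [Nat.cast_sub this]
        ring
      calc (((Ψ N).image (fun x => x + x)).card : ℝ)
          ≤ (((B N).image (fun x => x + x)).card : ℝ) + ((Ψ N \ B N).card : ℝ) := by
            exact_mod_cast this
        _ = ((B N).card : ℝ) / (r : ℝ) + (((Ψ N).card : ℝ) - ((B N).card : ℝ)) := by
            rw [h1, eB]
    have h3 : (((Ψ N).image (fun x => x + x)).card : ℝ) / ((Ψ N).card : ℝ)
        ≤ (((B N).card : ℝ) / (r : ℝ) + (((Ψ N).card : ℝ) - ((B N).card : ℝ)))
          / ((Ψ N).card : ℝ) := by gcongr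
    refine h3.trans (le_of_eq ?_)
    field_simp
end

section
/- Let G be a countable abelian group with [G : 2G] = ℓ < ∞ and |ker(D)| = r < ∞. For any Følner sequence Φ in G, |Φ_N/2| / |Φ_N ∩ 2G| → r and |Φ_N/2| / |Φ_N| → r/ℓ as N → ∞. -/
open Filter Pointwise
open scoped Classical

lemma filter_card_bound {α : Type*} [DecidableEq α] (A B : Finset α)
    (p : α → Prop) [DecidablePred p] :
    (A.filter p).card + (A ∩ B).card ≤ (B.filter p).card + A.card := by
  have h1 : A.filter p ⊆ (A ∩ B).filter p ∪ (A \ B) := by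
    intro x hx
    simp only [Finset.mem_filter, Finset.mem_union, Finset.mem_inter, Finset.mem_sdiff] at *
    tauto
  have h2 := Finset.card_le_card h1
  have h3 := Finset.card_union_le ((A ∩ B).filter p) (A \ B)
  have h4 : ((A ∩ B).filter p).card ≤ (B.filter p).card :=
    Finset.card_le_card (Finset.filter_subset_filter _ Finset.inter_subset_right)
  have h5 := Finset.card_sdiff_add_card_inter A B
  omega

lemma fiber_eq {G : Type*} [AddCommGroup G] (x₀ y : G) (h : x₀ + x₀ = y) :
    (fun x : G => x + x) ⁻¹' {y} = (fun k => x₀ + k) '' ((doubleHom G).ker : Set G) := by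
  ext x
  simp only [Set.mem_preimage, Set.mem_singleton_iff, Set.mem_image, SetLike.mem_coe,
    AddMonoidHom.mem_ker]
  constructor
  · intro hx
    refine ⟨x - x₀, ?_, by abel⟩
    have : doubleHom G (x - x₀) = (x + x) - (x₀ + x₀) := by
      show (x - x₀) + (x - x₀) = (x + x) - (x₀ + x₀); abel
    rw [this, hx, h, sub_self]
  · rintro ⟨k, hk, rfl⟩
    have hk' : k + k = 0 := hk
    have : (x₀ + k) + (x₀ + k) = (x₀ + x₀) + (k + k) := by abel
    rw [this, hk', h, add_zero]

lemma fiber_ncard {G : Type*} [AddCommGroup G] (r : ℕ)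
    (hker : Nat.card (doubleHom G).ker = r) (x₀ y : G) (h : x₀ + x₀ = y) :
    ((fun x : G => x + x) ⁻¹' {y}).ncard = r := by
  rw [fiber_eq x₀ y h, Set.ncard_image_of_injective _ (add_right_injective x₀),
    ← Nat.card_coe_set_eq, SetLike.coe_sort_coe, hker]

lemma preimage_ncard {G : Type*} [AddCommGroup G] (r : ℕ) (hr : 0 < r)
    (hker : Nat.card (doubleHom G).ker = r) (s : Finset G) :
    ((fun x : G => x + x) ⁻¹' (s : Set G)).ncard
      = r * (s.filter (fun y => y ∈ twoG G)).card := by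
  classical
  have hkfin : Finite (doubleHom G).ker := Nat.finite_of_card_ne_zero (by omega)
  have hkset : ((doubleHom G).ker : Set G).Finite := Set.toFinite _
  have hfib : ∀ y : G, ((fun x : G => x + x) ⁻¹' {y}).Finite := by
    intro y
    by_cases hy : ∃ x₀, x₀ + x₀ = y
    · obtain ⟨x₀, hx₀⟩ := hy
      rw [fiber_eq x₀ y hx₀]
      exact hkset.image _
    · have : (fun x : G => x + x) ⁻¹' {y} = ∅ := by
        ext x; simp only [Set.mem_preimage, Set.mem_singleton_iff, Set.mem_empty_iff_false,
          iff_false]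
        exact fun hx => hy ⟨x, hx⟩
      rw [this]; exact Set.finite_empty
  have hfin : ((fun x : G => x + x) ⁻¹' (s : Set G)).Finite := by
    have heq : (fun x : G => x + x) ⁻¹' (s : Set G)
        = ⋃ y ∈ (s : Set G), (fun x : G => x + x) ⁻¹' {y} := by
      ext x; simp
    rw [heq]
    exact s.finite_toSet.biUnion fun y _ => hfib y
  rw [Set.ncard_eq_toFinset_card _ hfin]
  set t := hfin.toFinset with ht
  have hmap : ∀ x ∈ t, x + x ∈ s.filter (fun y => y ∈ twoG G) := by
    intro x hx
    rw [ht, Set.Finite.mem_toFinset] at hx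
    simp only [Finset.mem_filter]
    exact ⟨hx, ⟨x, rfl⟩⟩
  rw [Finset.card_eq_sum_card_fiberwise hmap]
  have hconst : ∀ y ∈ s.filter (fun y => y ∈ twoG G),
      (t.filter (fun x => x + x = y)).card = r := by
    intro y hy
    rw [Finset.mem_filter] at hy
    obtain ⟨x₀, hx₀⟩ := hy.2
    have hx₀' : x₀ + x₀ = y := hx₀
    have hset : ((t.filter (fun x => x + x = y)) : Set G) = (fun x : G => x + x) ⁻¹' {y} := by
      ext x
      simp only [Finset.coe_filter, Set.mem_setOf_eq, ht, Set.Finite.mem_toFinset,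
        Set.mem_preimage, Finset.mem_coe, Set.mem_singleton_iff]
      constructor
      · exact fun h => h.2
      · intro h; exact ⟨by rw [h]; exact hy.1, h⟩
    have := fiber_ncard r hker x₀ y hx₀'
    rw [← hset, Set.ncard_coe_finset] at this
    exact this
  rw [Finset.sum_congr rfl hconst, Finset.sum_const, smul_eq_mul, mul_comm]

theorem stmt9 (G : Type*) [AddCommGroup G] [Countable G] (ℓ r : ℕ)
    (hℓ : 0 < ℓ) (hr : 0 < r)
    (hindex : (twoG G).index = ℓ) (hker : Nat.card (doubleHom G).ker = r)
    (Φ : ℕ → Finset G) (hΦ : IsFolner Φ) :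
    Tendsto (fun N =>
        ((((fun x : G => x + x) ⁻¹' (Φ N : Set G)).ncard : ℝ) /
          (((Φ N : Set G) ∩ (twoG G : Set G)).ncard : ℝ))) atTop (nhds (r : ℝ)) ∧
    Tendsto (fun N =>
        ((((fun x : G => x + x) ⁻¹' (Φ N : Set G)).ncard : ℝ) / ((Φ N).card : ℝ)))
      atTop (nhds ((r : ℝ) / (ℓ : ℝ))) := by
  classical
  set Q := G ⧸ twoG G with hQ
  have hQcard : Nat.card Q = ℓ := by rw [← AddSubgroup.index_eq_card]; exact hindex
  have hQfin : Finite Q := Nat.finite_of_card_ne_zero (by omega)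
  have : Fintype Q := Fintype.ofFinite Q
  have hQft : Fintype.card Q = ℓ := by rw [← Nat.card_eq_fintype_card]; exact hQcard
  set a : ℕ → Q → ℕ :=
    fun N q => ((Φ N).filter (fun x => (QuotientAddGroup.mk x : Q) = q)).card with ha
  set F : Q → ℕ → ℝ := fun q N => (a N q : ℝ) / ((Φ N).card : ℝ) with hF
  -- key diff estimate
  have hdiff : ∀ q : Q, Tendsto (fun N => F q N - F 0 N) atTop (nhds 0) := by
    intro q
    obtain ⟨g, hg⟩ := QuotientAddGroup.mk_surjective (s := twoG G) q
    have hbound : ∀ N, |F q N - F 0 N|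
        ≤ 1 - ((Φ N ∩ (Φ N).image (fun x => g + x)).card : ℝ) / ((Φ N).card : ℝ) := by
      intro N
      set A := Φ N with hA
      set B := A.image (fun x => g + x) with hB
      have hcardB : B.card = A.card := Finset.card_image_of_injective _ (add_right_injective g)
      have hBfilter : ∀ q' : Q, (B.filter (fun x => (QuotientAddGroup.mk x : Q)
          = QuotientAddGroup.mk g + q')).card
          = (A.filter (fun x => (QuotientAddGroup.mk x : Q) = q')).card := by
        intro q'
        rw [hB, Finset.filter_image]
        rw [Finset.card_image_of_injective _ (add_right_injective g)]
        congr 1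
        apply Finset.filter_congr
        intro x _
        simp only [QuotientAddGroup.mk_add]
        constructor
        · intro h; exact add_left_cancel h
        · intro h; rw [h]
      by_cases hc : (A.card : ℝ) = 0
      · have hA0 : A = ∅ := Finset.card_eq_zero.mp (by exact_mod_cast hc)
        have hΦN : Φ N = ∅ := by rw [← hA]; exact hA0
        have hz : F q N = 0 ∧ F 0 N = 0 := by
          constructor <;> · simp [hF, ha, hΦN]
        rw [hz.1, hz.2, sub_zero, abs_zero]
        have hAB : A ∩ B = ∅ := by rw [hA0]; simp
        rw [hAB]
        simp
      -- real bound
      have h1 := filter_card_bound A B (fun x => (QuotientAddGroup.mk x : Q)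
          = QuotientAddGroup.mk g + 0)
      have h2 := filter_card_bound B A (fun x => (QuotientAddGroup.mk x : Q)
          = QuotientAddGroup.mk g + 0)
      rw [hBfilter 0] at h1 h2
      rw [Finset.inter_comm B A, hcardB] at h2
      -- a N q = filter A at (mk g + 0)  since q = mk g = mk g + 0
      have hq : q = QuotientAddGroup.mk g + 0 := by rw [add_zero, hg]
      have haq : a N q = (A.filter (fun x => (QuotientAddGroup.mk x : Q)
          = QuotientAddGroup.mk g + 0)).card := by rw [ha, hq, hA]
      have ha0 : a N 0 = (A.filter (fun x => (QuotientAddGroup.mk x : Q) = 0)).card := by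
        rw [ha, hA]
      have hcpos : (0:ℝ) < (A.card : ℝ) := by
        rcases Nat.eq_zero_or_pos A.card with h | h
        · exact absurd (by exact_mod_cast h) hc
        · exact_mod_cast h
      simp only [hF]
      rw [abs_sub_le_iff]
      have hι : ((A ∩ B).card : ℝ) ≤ (A.card : ℝ) := by
        exact_mod_cast Finset.card_le_card Finset.inter_subset_left
      constructor
      · rw [div_sub_div_same, div_le_iff₀ hcpos, sub_mul, one_mul, div_mul_cancel₀ _ hcpos.ne']
        rw [haq, ha0]
        have h1' := (Nat.cast_le (α := ℝ)).mpr h1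
        push_cast at h1'
        linarith
      · rw [div_sub_div_same, div_le_iff₀ hcpos, sub_mul, one_mul, div_mul_cancel₀ _ hcpos.ne']
        rw [haq, ha0]
        have h2' := (Nat.cast_le (α := ℝ)).mpr h2
        push_cast at h2'
        linarith
    have hg0 : Tendsto (fun N => 1 - ((Φ N ∩ (Φ N).image (fun x => g + x)).card : ℝ)
        / ((Φ N).card : ℝ)) atTop (nhds 0) := by
      have := (tendsto_const_nhds (x := (1:ℝ)) (f := atTop)).sub (hΦ g)
      simpa using this
    have habs : Tendsto (fun N => |F q N - F 0 N|) atTop (nhds 0) :=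
      squeeze_zero (fun N => abs_nonneg _) hbound hg0
    exact (tendsto_zero_iff_abs_tendsto_zero _).mpr habs
  -- eventually nonempty
  have hne : ∀ᶠ N in atTop, (Φ N).card ≠ 0 := by
    have := (hΦ 0).eventually (eventually_gt_nhds (by norm_num : (0:ℝ) < 1))
    filter_upwards [this] with N hN
    intro h0
    rw [h0] at hN
    simp at hN
  -- sum of F q N = 1 eventually
  have hsum1 : ∀ᶠ N in atTop, ∑ q : Q, F q N = 1 := by
    filter_upwards [hne] with N hN
    have hfib : (Φ N).card = ∑ q : Q, a N q := by
      rw [ha]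
      exact Finset.card_eq_sum_card_fiberwise (fun x _ => Finset.mem_univ _)
    simp only [hF]
    rw [← Finset.sum_div, div_eq_one_iff_eq (by exact_mod_cast hN)]
    exact_mod_cast hfib.symm
  -- ℓ * F 0 N → 1
  have hsumdiff : Tendsto (fun N => ∑ q : Q, (F q N - F 0 N)) atTop (nhds 0) := by
    have := tendsto_finset_sum (Finset.univ : Finset Q) (fun q _ => hdiff q)
    simpa using this
  have hmul : Tendsto (fun N => (ℓ : ℝ) * F 0 N) atTop (nhds 1) := by
    have heq : ∀ᶠ N in atTop, 1 - ∑ q : Q, (F q N - F 0 N) = (ℓ : ℝ) * F 0 N := by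
      filter_upwards [hsum1] with N hN
      rw [Finset.sum_sub_distrib, hN, Finset.sum_const, Finset.card_univ, hQft]
      push_cast
      ring
    have : Tendsto (fun N => 1 - ∑ q : Q, (F q N - F 0 N)) atTop (nhds 1) := by
      have := (tendsto_const_nhds (x := (1:ℝ)) (f := atTop)).sub hsumdiff
      simpa using this
    exact this.congr' heq
  have hℓne : (ℓ : ℝ) ≠ 0 := by exact_mod_cast hℓ.ne'
  have hF0 : Tendsto (F 0) atTop (nhds (1 / (ℓ : ℝ))) := by
    have := hmul.div_const (ℓ : ℝ)
    have heq : (fun N => (ℓ : ℝ) * F 0 N / (ℓ : ℝ)) = F 0 := by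
      funext N; field_simp
    rwa [heq] at this
  -- relate a N 0 with the intersection with 2G
  have hint : ∀ N, ((Φ N : Set G) ∩ (twoG G : Set G)).ncard = a N 0 := by
    intro N
    have : ((Φ N : Set G) ∩ (twoG G : Set G))
        = ((Φ N).filter (fun x => (QuotientAddGroup.mk x : Q) = 0) : Finset G) := by
      ext x
      simp only [Set.mem_inter_iff, Finset.mem_coe, SetLike.mem_coe, Finset.coe_filter,
        Set.mem_setOf_eq]
      rw [QuotientAddGroup.eq_zero_iff]
    rw [this, Set.ncard_coe_finset, ha]
  have hpre : ∀ N, ((fun x : G => x + x) ⁻¹' (Φ N : Set G)).ncard = r * a N 0 := by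
    intro N
    rw [preimage_ncard r hr hker (Φ N), ha]
    congr 2
    apply Finset.filter_congr
    intro x _
    simp [QuotientAddGroup.eq_zero_iff]
  -- eventually a N 0 positive
  have hapos : ∀ᶠ N in atTop, 0 < a N 0 := by
    have hpos : (0:ℝ) < 1 / (ℓ:ℝ) := by positivity
    have := hF0.eventually (eventually_gt_nhds hpos)
    filter_upwards [this] with N hN
    by_contra h
    push_neg at h
    have h0 : a N 0 = 0 := Nat.le_zero.mp h
    rw [hF] at hN
    simp only [h0, Nat.cast_zero, zero_div] at hN
    exact lt_irrefl _ hN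
  constructor
  · -- first limit: ratio is eventually r
    have heq : ∀ᶠ N in atTop, ((((fun x : G => x + x) ⁻¹' (Φ N : Set G)).ncard : ℝ) /
        (((Φ N : Set G) ∩ (twoG G : Set G)).ncard : ℝ)) = (r : ℝ) := by
      filter_upwards [hapos] with N hN
      rw [hpre N, hint N]
      have hne' : ((a N 0 : ℝ)) ≠ 0 := by exact_mod_cast hN.ne'
      push_cast
      rw [mul_div_assoc, div_self hne', mul_one]
    exact tendsto_const_nhds.congr' (heq.mono fun N h => h.symm)
  · -- second limit
    have heq : (fun N => ((((fun x : G => x + x) ⁻¹' (Φ N : Set G)).ncard : ℝ) /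
        ((Φ N).card : ℝ))) = fun N => (r : ℝ) * F 0 N := by
      funext N
      rw [hpre N, hF]
      push_cast
      rw [mul_div_assoc]
    rw [heq]
    have := hF0.const_mul (r : ℝ)
    rwa [mul_one_div] at this
end

section
/- Let G be a countable abelian group with [G:2G] = ℓ < ∞, |ker(D)| = r < ∞, and coset representatives g₁ = 0, g₂, ..., g_ℓ with G the disjoint union of gᵢ + 2G. If Ψ is a Følner sequence in G and F_N = ⋃ᵢ (gᵢ + 2Ψ_N), then (F_N) is also a Følner sequence in G. -/
open Filter Pointwise
open scoped Classical

/-!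
Writing `x - h ∈ g_j + 2G` for a point `x = g_i + 2u` of `F_N`, one gets
`x - h = g_j + 2(u - c_i)` with `c_i` depending only on `h` and `i`. Hence a point of `F_N` that is
not in `h + F_N` comes from some `u ∈ Ψ_N \ (c_i + Ψ_N)`, so `|F_N \ (h + F_N)|` is at most
`∑ᵢ |Ψ_N \ (c_i + Ψ_N)|`. Since doubling is at most `r`-to-one, `|Ψ_N| ≤ r |2Ψ_N| ≤ r |F_N|`, and
the relative defect of `F_N` is at most `r` times a finite sum of relative defects of `Ψ_N`.
-/

open Finset

lemma card_le_card_ker_mul_card_image {G H : Type*} [AddGroup G] [AddGroup H] (f : G →+ H)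
    [Finite f.ker] (S : Finset G) : S.card ≤ Nat.card f.ker * (S.image f).card := by
  have hker : (f.ker : Set G).Finite := Set.toFinite _
  refine card_le_mul_card_image S _ fun a ha => ?_
  obtain ⟨x₀, -, rfl⟩ := mem_image.mp ha
  refine (card_le_card_of_injOn (fun x => x - x₀) (fun x hx => ?_)
    sub_left_injective.injOn).trans_eq (Nat.card_eq_card_finite_toFinset hker).symm
  have hfx : f x = f x₀ := (mem_filter.mp hx).2
  simp [AddMonoidHom.mem_ker, map_sub, hfx]

lemma mem_twoG_iff {G : Type*} [AddCommGroup G] {z : G} : z ∈ twoG G ↔ ∃ y, y + y = z :=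
  Iff.rfl

lemma card_inter_div_card_add_card_sdiff_div_card {α : Type*} {Φ : Finset α} (T : Finset α)
    (hΦ : Φ.Nonempty) :
    ((Φ ∩ T).card : ℝ) / Φ.card + ((Φ \ T).card : ℝ) / Φ.card = 1 := by
  rw [← add_div, div_eq_one_iff_eq (by simp [hΦ.ne_empty])]
  exact_mod_cast card_inter_add_card_sdiff Φ T

-- With `0 / 0 = 0`, an empty `Φ N` has ratio `0` on the left and defect `0` on the right,
-- hence the nonemptiness condition.
theorem isFolner_iff {G : Type*} [AddCommGroup G] {Φ : ℕ → Finset G} :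
    IsFolner Φ ↔ (∀ᶠ N in atTop, (Φ N).Nonempty) ∧ ∀ g : G,
      Tendsto (fun N => ((Φ N \ (Φ N).image (fun x => g + x)).card : ℝ) / (Φ N).card)
        atTop (nhds 0) := by
  constructor
  · intro hΦ
    have hne : ∀ᶠ N in atTop, (Φ N).Nonempty := by
      filter_upwards [(hΦ 0).eventually (eventually_gt_nhds one_pos)] with N hN
      by_contra hempty
      simp [not_nonempty_iff_eq_empty.mp hempty] at hN
    refine ⟨hne, fun g => ?_⟩
    have hlim := (tendsto_const_nhds (x := (1 : ℝ))).sub (hΦ g)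
    rw [sub_self] at hlim
    refine hlim.congr' ?_
    filter_upwards [hne] with N hN
    linarith [card_inter_div_card_add_card_sdiff_div_card ((Φ N).image (fun x => g + x)) hN]
  · rintro ⟨hne, hΦ⟩ g
    have hlim := (tendsto_const_nhds (x := (1 : ℝ))).sub (hΦ g)
    rw [sub_zero] at hlim
    refine hlim.congr' ?_
    filter_upwards [hne] with N hN
    linarith [card_inter_div_card_add_card_sdiff_div_card ((Φ N).image (fun x => g + x)) hN]

section DoubledTranslates

variable {G ι : Type*} [AddCommGroup G] [Fintype ι]

noncomputable def doubledTranslates (g : ι → G) (Ψ : Finset G) : Finset G :=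
  univ.biUnion fun i => (Ψ.image fun x => x + x).image fun y => g i + y

lemma mem_doubledTranslates {g : ι → G} {Ψ : Finset G} {x : G} :
    x ∈ doubledTranslates g Ψ ↔ ∃ i, ∃ u ∈ Ψ, g i + (u + u) = x := by
  simp only [doubledTranslates, mem_biUnion, mem_univ, true_and, mem_image,
    exists_exists_and_eq_and]

lemma card_le_card_ker_mul_card_doubledTranslates [Nonempty ι] [Finite (doubleHom G).ker]
    (g : ι → G) (Ψ : Finset G) :
    Ψ.card ≤ Nat.card (doubleHom G).ker * (doubledTranslates g Ψ).card := by
  obtain ⟨i⟩ := ‹Nonempty ι›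
  calc Ψ.card ≤ Nat.card (doubleHom G).ker * (Ψ.image (doubleHom G)).card :=
        card_le_card_ker_mul_card_image _ Ψ
    _ = Nat.card (doubleHom G).ker * ((Ψ.image fun x => x + x).image fun y => g i + y).card := by
        rw [card_image_of_injective _ (add_right_injective _)]
        rfl
    _ ≤ Nat.card (doubleHom G).ker * (doubledTranslates g Ψ).card :=
        Nat.mul_le_mul_left _ (card_le_card (subset_biUnion_of_mem
          (fun i => (Ψ.image fun x => x + x).image fun y => g i + y) (mem_univ i)))

lemma exists_card_sdiff_doubledTranslates_le (g : ι → G)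
    (hcover : ∀ x : G, ∃ i, x - g i ∈ twoG G) (h : G) :
    ∃ c : ι → G, ∀ Ψ : Finset G,
      (doubledTranslates g Ψ \ (doubledTranslates g Ψ).image (fun x => h + x)).card ≤
        ∑ i, (Ψ \ Ψ.image (fun x => c i + x)).card := by
  choose j hj using fun i => hcover (g i - h)
  choose c hc using fun i => mem_twoG_iff.mp (hj i)
  refine ⟨fun i => -c i, fun Ψ => ?_⟩
  have hsub : doubledTranslates g Ψ \ (doubledTranslates g Ψ).image (fun x => h + x) ⊆
      univ.biUnion fun i =>
        ((Ψ \ Ψ.image (fun x => -c i + x)).image fun x => x + x).image fun y => g i + y := by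
    intro x hx
    obtain ⟨hxF, hxh⟩ := mem_sdiff.mp hx
    obtain ⟨i, u, hu, rfl⟩ := mem_doubledTranslates.mp hxF
    simp only [mem_biUnion, mem_univ, true_and, mem_image]
    refine ⟨i, u + u, ⟨u, mem_sdiff.mpr ⟨hu, fun hu' => hxh ?_⟩, rfl⟩, rfl⟩
    obtain ⟨v, hv, hvu⟩ := mem_image.mp hu'
    refine mem_image.mpr ⟨g (j i) + (v + v), mem_doubledTranslates.mpr ⟨j i, v, hv, rfl⟩, ?_⟩
    rw [← hvu, show g i + ((-c i + v) + (-c i + v)) = g i - (c i + c i) + (v + v) by abel, hc i]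
    abel
  calc _ ≤ _ := card_le_card hsub
    _ ≤ _ := card_biUnion_le
    _ ≤ _ := sum_le_sum fun i _ => card_image_le.trans card_image_le

end DoubledTranslates

lemma div_le_mul_sum_div {ι : Type*} (t : Finset ι) {a p q r : ℕ} {b : ι → ℕ}
    (ha : a ≤ ∑ i ∈ t, b i) (hpq : p ≤ r * q) (hp : 0 < p) :
    (a : ℝ) / q ≤ r * ∑ i ∈ t, (b i : ℝ) / p := by
  have hq : (0 : ℝ) < q := by exact_mod_cast Nat.pos_of_mul_pos_left (hp.trans_le hpq)
  have hp' : (0 : ℝ) < p := by exact_mod_cast hp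
  rw [← sum_div, mul_div_assoc', div_le_div_iff₀ hq hp']
  have ha' : (a : ℝ) ≤ ∑ i ∈ t, (b i : ℝ) := by exact_mod_cast ha
  have hpq' : (p : ℝ) ≤ r * q := by exact_mod_cast hpq
  nlinarith [(Nat.cast_nonneg a : (0 : ℝ) ≤ a)]

theorem stmt10_general (G : Type*) [AddCommGroup G] (ℓ r : ℕ)
    (hr : 0 < r)
    (g : Fin ℓ → G)
    (hcover : ∀ x : G, ∃! i : Fin ℓ, x - g i ∈ twoG G)
    (hker : Nat.card (doubleHom G).ker = r)
    (Ψ : ℕ → Finset G) (hΨ : IsFolner Ψ) :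
    IsFolner (fun N =>
      Finset.univ.biUnion (fun i : Fin ℓ =>
        ((Ψ N).image (fun x => x + x)).image (fun y => g i + y))) := by
  have : Nonempty (Fin ℓ) := ⟨(hcover 0).exists.choose⟩
  have : Finite (doubleHom G).ker := Nat.finite_of_card_ne_zero (hker ▸ hr.ne')
  have hcard N : (Ψ N).card ≤ r * (doubledTranslates g (Ψ N)).card :=
    hker ▸ card_le_card_ker_mul_card_doubledTranslates g (Ψ N)
  change IsFolner fun N => doubledTranslates g (Ψ N)
  obtain ⟨hne, hdefect⟩ := isFolner_iff.mp hΨ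
  refine isFolner_iff.mpr ⟨hne.mono fun N hN => card_pos.mp ?_, fun h => ?_⟩
  · exact Nat.pos_of_mul_pos_left ((card_pos.mpr hN).trans_le (hcard N))
  obtain ⟨c, hc⟩ := exists_card_sdiff_doubledTranslates_le g (fun x => (hcover x).exists) h
  have hlim : Tendsto (fun N => (r : ℝ) * ∑ i, ((Ψ N \ (Ψ N).image (fun x => c i + x)).card : ℝ)
      / (Ψ N).card) atTop (nhds 0) := by
    simpa using (tendsto_finsetSum univ fun i _ => hdefect (c i)).const_mul (r : ℝ)
  refine squeeze_zero' (Eventually.of_forall fun N => by positivity) ?_ hlim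
  filter_upwards [hne] with N hN
  exact div_le_mul_sum_div univ (hc (Ψ N)) (hcard N) (card_pos.mpr hN)

theorem stmt10 (G : Type*) [AddCommGroup G] [Countable G] (ℓ r : ℕ)
    (hℓ : 0 < ℓ) (hr : 0 < r)
    (g : Fin ℓ → G) (hg0 : g ⟨0, hℓ⟩ = 0)
    (hcover : ∀ x : G, ∃! i : Fin ℓ, x - g i ∈ twoG G)
    (hker : Nat.card (doubleHom G).ker = r)
    (Ψ : ℕ → Finset G) (hΨ : IsFolner Ψ) :
    IsFolner (fun N =>
      Finset.univ.biUnion (fun i : Fin ℓ =>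
        ((Ψ N).image (fun x => x + x)).image (fun y => g i + y))) :=
  stmt10_general G ℓ r hr g hcover hker Ψ hΨ
end

section
/- Let G be a countable abelian group with 2G infinite and [G : 2G] = ∞, and let Φ be any Følner sequence in G. Then there exists a set A ⊆ G with upper density 1 along Φ such that for every t ∈ G and every infinite B ⊆ G, t + B + B is not contained in A. -/
/-!
A coset of a subgroup of infinite index has density zero along any Følner sequence: its
translates into k distinct cosets are disjoint, and by the Følner property each of them has
almost the same density. This applies to `2G` and to the kernel `K` of `g ↦ 2g`, since
`G ⧸ K ≃ 2G` is infinite. Enumerating `G` as `e₀, e₁, …`, the union `D_k` of the cosets of `2G`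
and of `K` through `e₀, …, e_k` has density zero, so some `Φ_{N_k}` with `N_k ≥ k` is almost
disjoint from `D_k`, and `A = ⋃ₖ (Φ_{N_k} \ D_k)` has upper density `1` but meets each coset of
`2G` and of `K` in a finite set. If `t + B + B ⊆ A` with `B` infinite, either `b ↦ 2b` takes
infinitely many values on `B`, and `t + 2B` is an infinite subset of `A ∩ (t + 2G)`, or it is
constant on an infinite `B' ⊆ B`, and `t + b₀ + B'` is an infinite subset of `A` inside one
coset of `K`.
-/

open Filter Pointwise
open scoped Classical

section RelDensity

open Finset

variable {α : Type*} (Φ : ℕ → Finset α)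

/-- Its `limsup` is the upper density of `S` along `Φ`; it is `0` when `Φ N = ∅`. -/
noncomputable def relDensity (S : Set α) (N : ℕ) : ℝ :=
  ((S ∩ (Φ N : Set α)).ncard : ℝ) / #(Φ N)

variable {Φ}

lemma relDensity_eq_card_filter (S : Set α) (N : ℕ) :
    relDensity Φ S N = #{x ∈ Φ N | x ∈ S} / #(Φ N) := by
  rw [relDensity, ← Set.ncard_coe_finset {x ∈ Φ N | x ∈ S}, coe_filter, Set.inter_comm]
  rfl

lemma relDensity_nonneg (S : Set α) (N : ℕ) : 0 ≤ relDensity Φ S N := by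
  unfold relDensity; positivity

lemma relDensity_le_one (S : Set α) (N : ℕ) : relDensity Φ S N ≤ 1 := by
  rw [relDensity_eq_card_filter]
  exact div_le_one_of_le₀ (by exact_mod_cast card_filter_le _ _) (Nat.cast_nonneg _)

lemma relDensity_le_of_inter_subset {S T : Set α} {N : ℕ} (h : S ∩ Φ N ⊆ T) :
    relDensity Φ S N ≤ relDensity Φ T N := by
  simp only [relDensity_eq_card_filter]
  refine div_le_div_of_nonneg_right ?_ (Nat.cast_nonneg _)
  exact_mod_cast card_le_card fun x hx => by
    simp only [mem_filter] at hx ⊢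
    exact ⟨hx.1, h ⟨hx.2, hx.1⟩⟩

lemma relDensity_union_le (S T : Set α) (N : ℕ) :
    relDensity Φ (S ∪ T) N ≤ relDensity Φ S N + relDensity Φ T N := by
  simp only [relDensity_eq_card_filter, ← add_div, Set.mem_union, filter_or]
  gcongr
  exact_mod_cast card_union_le _ _

lemma relDensity_add_relDensity_compl {N : ℕ} (hN : (Φ N).Nonempty) (S : Set α) :
    relDensity Φ S N + relDensity Φ Sᶜ N = 1 := by
  simp only [relDensity_eq_card_filter, ← add_div, Set.mem_compl_iff]
  rw [← Nat.cast_add, card_filter_add_card_filter_not, div_self]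
  exact_mod_cast hN.card_pos.ne'

lemma sum_relDensity_le_one {ι : Type*} {I : Finset ι} {S : ι → Set α}
    (hS : (I : Set ι).PairwiseDisjoint S) (N : ℕ) :
    ∑ i ∈ I, relDensity Φ (S i) N ≤ 1 := by
  simp only [relDensity_eq_card_filter, ← sum_div]
  refine div_le_one_of_le₀ ?_ (Nat.cast_nonneg _)
  have hdisj : (I : Set ι).PairwiseDisjoint fun i => {x ∈ Φ N | x ∈ S i} :=
    fun i hi j hj hij =>
      disjoint_filter.2 fun _ _ hx => Set.disjoint_left.mp (hS hi hj hij) hx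
  rw [← Nat.cast_sum, ← card_biUnion hdisj]
  exact_mod_cast card_le_card (biUnion_subset.mpr fun i _ => filter_subset _ _)

lemma tendsto_relDensity_union {S T : Set α}
    (hS : Tendsto (relDensity Φ S) atTop (nhds 0))
    (hT : Tendsto (relDensity Φ T) atTop (nhds 0)) :
    Tendsto (relDensity Φ (S ∪ T)) atTop (nhds 0) := by
  refine tendsto_of_tendsto_of_tendsto_of_le_of_le tendsto_const_nhds (by simpa using hS.add hT)
    (relDensity_nonneg _) (relDensity_union_le S T)

lemma tendsto_relDensity_accumulate {S : ℕ → Set α}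
    (hS : ∀ i, Tendsto (relDensity Φ (S i)) atTop (nhds 0)) (n : ℕ) :
    Tendsto (relDensity Φ (Set.accumulate S n)) atTop (nhds 0) := by
  induction n with
  | zero => simpa [Set.accumulate_zero_nat] using hS 0
  | succ n ih => simpa [Set.accumulate_succ] using tendsto_relDensity_union ih (hS (n + 1))

lemma limsup_relDensity_eq_one {A : Set α} {n : ℕ → ℕ} (hn : Tendsto n atTop atTop)
    (hA : Tendsto (relDensity Φ A ∘ n) atTop (nhds 1)) :
    limsup (relDensity Φ A) atTop = 1 := by
  have hbdd : IsBoundedUnder (· ≤ ·) atTop (relDensity Φ A) :=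
    isBoundedUnder_of ⟨1, relDensity_le_one A⟩
  have hcobdd : IsCoboundedUnder (· ≤ ·) atTop (relDensity Φ A) :=
    isCoboundedUnder_le_of_le atTop (relDensity_nonneg A)
  refine le_antisymm (limsup_le_of_le hcobdd (.of_forall (relDensity_le_one A))) ?_
  calc (1 : ℝ) = limsup (relDensity Φ A ∘ n) atTop := hA.limsup_eq.symm
    _ ≤ limsup (relDensity Φ A) atTop :=
      hn.limsup_comp_le_limsup (isCoboundedUnder_le_of_le _ (relDensity_nonneg A)) hbdd

theorem exists_limsup_relDensity_eq_one_inter_finite (hne : ∀ᶠ N in atTop, (Φ N).Nonempty)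
    {D : ℕ → Set α} (hD : Monotone D)
    (h0 : ∀ k, Tendsto (relDensity Φ (D k)) atTop (nhds 0)) :
    ∃ A : Set α, limsup (relDensity Φ A) atTop = 1 ∧ ∀ k, (A ∩ D k).Finite := by
  have hsmall (k : ℕ) : ∀ᶠ N in atTop,
      (k ≤ N ∧ (Φ N).Nonempty) ∧ relDensity Φ (D k) N ≤ 1 / (k + 1) :=
    ((eventually_ge_atTop k).and hne).and ((h0 k).eventually (eventually_le_nhds (by positivity)))
  choose n hn using fun k => (hsmall k).exists
  set A : Set α := ⋃ k, (Φ (n k) : Set α) \ D k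
  refine ⟨A, ?_, fun k => ?_⟩
  · refine limsup_relDensity_eq_one (tendsto_atTop_mono (fun k => (hn k).1.1) tendsto_id) ?_
    have hlow (k : ℕ) : 1 - 1 / ((k : ℝ) + 1) ≤ relDensity Φ A (n k) :=
      calc 1 - 1 / ((k : ℝ) + 1) ≤ 1 - relDensity Φ (D k) (n k) := by linarith [(hn k).2]
        _ = relDensity Φ (D k)ᶜ (n k) := by
          linarith [relDensity_add_relDensity_compl (hn k).1.2 (D k)]
        _ ≤ _ := relDensity_le_of_inter_subset fun x hx => Set.mem_iUnion_of_mem k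
          (show x ∈ (Φ (n k) : Set α) \ D k from ⟨hx.2, hx.1⟩)
    refine tendsto_of_tendsto_of_tendsto_of_le_of_le ?_ tendsto_const_nhds hlow
      (fun k => relDensity_le_one _ _)
    simpa using tendsto_one_div_add_atTop_nhds_zero_nat.const_sub (1 : ℝ)
  · refine ((Set.finite_Iio k).biUnion fun j _ => (Φ (n j)).finite_toSet).subset ?_
    rintro x ⟨hxA, hxD⟩
    obtain ⟨j, hxj, hxDj⟩ := Set.mem_iUnion.1 hxA
    exact Set.mem_biUnion (lt_of_not_ge fun hkj => hxDj (hD hkj hxD)) hxj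

end RelDensity

section Folner

open Finset

variable {G : Type*} [AddCommGroup G] {Φ : ℕ → Finset G}

lemma IsFolner.eventually_nonempty (hΦ : IsFolner Φ) : ∀ᶠ N in atTop, (Φ N).Nonempty := by
  filter_upwards [(hΦ 0).eventually (eventually_gt_nhds one_pos)] with N hN
  by_contra h
  simp [not_nonempty_iff_eq_empty.mp h] at hN

lemma IsFolner.eventually_card_image_sdiff_le (hΦ : IsFolner Φ) (g : G) {ε : ℝ}
    (hε : 0 < ε) :
    ∀ᶠ N in atTop, (#((Φ N).image (g + ·) \ Φ N) : ℝ) ≤ ε * #(Φ N) := by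
  filter_upwards [(hΦ g).eventually (eventually_gt_nhds (sub_lt_self 1 hε))] with N hN
  have hsplit : #((Φ N).image (g + ·) \ Φ N) + #(Φ N ∩ (Φ N).image (g + ·)) = #(Φ N) := by
    rw [inter_comm, card_sdiff_add_card_inter, card_image_of_injective _ (add_right_injective g)]
  rcases (Φ N).eq_empty_or_nonempty with hemp | hne
  · simp [hemp]
  · have hpos : (0 : ℝ) < #(Φ N) := by exact_mod_cast hne.card_pos
    rw [lt_div_iff₀ hpos] at hN
    have hsplit' : (#((Φ N).image (g + ·) \ Φ N) : ℝ) + #(Φ N ∩ (Φ N).image (g + ·))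
        = #(Φ N) := by
      exact_mod_cast hsplit
    linarith

lemma card_filter_le_card_filter_vadd_add (s : Finset G) (S : Set G) (t : G) :
    #{x ∈ s | x ∈ S} ≤ #{x ∈ s | x ∈ t +ᵥ S} + #(s.image (t + ·) \ s) := by
  calc #{x ∈ s | x ∈ S} = #({x ∈ s | x ∈ S}.image (t + ·)) :=
        (card_image_of_injective _ (add_right_injective t)).symm
    _ ≤ #({x ∈ s | x ∈ t +ᵥ S} ∪ (s.image (t + ·) \ s)) := by
        refine card_le_card fun y hy => ?_
        obtain ⟨x, hx, rfl⟩ := mem_image.mp hy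
        rw [mem_filter] at hx
        by_cases hys : t + x ∈ s
        · exact mem_union_left _ (mem_filter.mpr ⟨hys, Set.vadd_mem_vadd_set hx.2⟩)
        · exact mem_union_right _ (mem_sdiff.mpr ⟨mem_image_of_mem _ hx.1, hys⟩)
    _ ≤ _ := card_union_le _ _

lemma IsFolner.eventually_relDensity_le_vadd (hΦ : IsFolner Φ) (S : Set G) (t : G) {ε : ℝ}
    (hε : 0 < ε) : ∀ᶠ N in atTop, relDensity Φ S N ≤ relDensity Φ (t +ᵥ S) N + ε := by
  filter_upwards [hΦ.eventually_card_image_sdiff_le t hε] with N hN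
  simp only [relDensity_eq_card_filter]
  calc (#{x ∈ Φ N | x ∈ S} : ℝ) / #(Φ N)
      ≤ (#{x ∈ Φ N | x ∈ t +ᵥ S} + ε * #(Φ N)) / #(Φ N) := by
        have h : (#{x ∈ Φ N | x ∈ S} : ℝ)
            ≤ #{x ∈ Φ N | x ∈ t +ᵥ S} + #((Φ N).image (t + ·) \ Φ N) := by
          exact_mod_cast card_filter_le_card_filter_vadd_add (Φ N) S t
        gcongr
        linarith
    _ ≤ #{x ∈ Φ N | x ∈ t +ᵥ S} / #(Φ N) + ε := by
        rw [add_div, mul_div_assoc]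
        gcongr
        exact mul_le_of_le_one_right hε.le (div_self_le_one _)

end Folner

section Coset

open Finset QuotientAddGroup

variable {G : Type*} [AddCommGroup G]

lemma vadd_preimage_mk_singleton {H : AddSubgroup G} (t : G) (q : G ⧸ H) :
    t +ᵥ (mk ⁻¹' {q} : Set G) = mk ⁻¹' {(t : G ⧸ H) + q} := by
  ext y
  simp [Set.mem_vadd_set_iff_neg_vadd_mem, neg_add_eq_iff_eq_add]

lemma IsFolner.tendsto_relDensity_preimage_mk {Φ : ℕ → Finset G} (hΦ : IsFolner Φ)
    {H : AddSubgroup G} (hH : H.index = 0) (q : G ⧸ H) :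
    Tendsto (relDensity Φ (mk ⁻¹' {q})) atTop (nhds 0) := by
  have := AddSubgroup.index_eq_zero_iff_infinite.mp hH
  let ι := Infinite.natEmbedding (G ⧸ H)
  have hdisj (k : ℕ) : ((range k : Finset ℕ) : Set ℕ).PairwiseDisjoint
      fun i => (mk ⁻¹' {ι i} : Set G) := fun i _ j _ hij =>
    (Set.disjoint_singleton.2 (ι.injective.ne hij)).preimage _
  have hbound (k : ℕ) (hk : 0 < k) :
      ∀ᶠ N in atTop, relDensity Φ (mk ⁻¹' {q}) N ≤ 2 / k := by
    have hk' : (0 : ℝ) < k := Nat.cast_pos.2 hk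
    filter_upwards [(eventually_all_finset (range k)).2 fun i _ =>
      hΦ.eventually_relDensity_le_vadd (mk ⁻¹' {q}) (ι i - q).out (one_div_pos.2 hk')]
      with N hN
    simp only [vadd_preimage_mk_singleton, out_eq', sub_add_cancel] at hN
    have hsum := sum_le_sum hN
    rw [sum_const, card_range, nsmul_eq_mul, sum_add_distrib, sum_const, card_range,
      nsmul_eq_mul, mul_one_div_cancel hk'.ne'] at hsum
    rw [le_div_iff₀ hk', mul_comm]
    linarith [sum_relDensity_le_one (Φ := Φ) (hdisj k) N]
  refine tendsto_order.2 ⟨fun b hb => .of_forall fun N => hb.trans_le (relDensity_nonneg _ _),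
    fun ε hε => ?_⟩
  obtain ⟨k, hk⟩ := exists_nat_gt (2 / ε)
  have hk0 : 0 < k := Nat.cast_pos.1 ((div_pos two_pos hε).trans hk)
  filter_upwards [hbound k hk0] with N hN
  exact hN.trans_lt ((div_lt_iff₀ (Nat.cast_pos.2 hk0)).2 ((div_lt_iff₀' hε).1 hk))

end Coset

open QuotientAddGroup in
lemma not_singleton_add_add_subset_of_finite_inter_cosets {G : Type*} [AddCommGroup G]
    {A : Set G} (h2G : ∀ c : G ⧸ twoG G, (A ∩ mk ⁻¹' {c}).Finite)
    (hker : ∀ c : G ⧸ (doubleHom G).ker, (A ∩ mk ⁻¹' {c}).Finite)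
    (t : G) {B : Set G} (hB : B.Infinite) : ¬ ({t} + B + B ⊆ A) := by
  intro hsub
  have hmem (b : G) (hb : b ∈ B) (b' : G) (hb' : b' ∈ B) : t + b + b' ∈ A :=
    hsub (Set.add_mem_add (Set.add_mem_add rfl hb) hb')
  by_cases himg : (doubleHom G '' B).Finite
  · obtain ⟨v, -, hfib⟩ : ∃ v ∈ doubleHom G '' B, (B ∩ doubleHom G ⁻¹' {v}).Infinite := by
      by_contra! h
      exact hB (.of_finite_fibers _ himg h)
    obtain ⟨b₀, hb₀B, hb₀v⟩ := hfib.nonempty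
    refine (hker (t + b₀ + b₀)).not_infinite
      ((hfib.image (add_right_injective (t + b₀)).injOn).mono ?_)
    rintro _ ⟨b, ⟨hbB, hbv⟩, rfl⟩
    refine ⟨hmem b₀ hb₀B b hbB, ?_⟩
    simp only [Set.mem_preimage, Set.mem_singleton_iff] at hbv hb₀v
    change (mk (t + b₀ + b) : G ⧸ (doubleHom G).ker) = mk (t + b₀ + b₀)
    rw [QuotientAddGroup.eq, AddMonoidHom.mem_ker,
      show -(t + b₀ + b) + (t + b₀ + b₀) = b₀ - b by abel, map_sub, hbv, hb₀v, sub_self]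
  · refine (h2G t).not_infinite
      ((Set.Infinite.image (add_right_injective t).injOn himg).mono ?_)
    rintro _ ⟨_, ⟨b, hb, rfl⟩, rfl⟩
    refine ⟨show t + (b + b) ∈ A by simpa only [add_assoc] using hmem b hb b hb, ?_⟩
    change (↑(t + doubleHom G b) : G ⧸ twoG G) = t
    rw [mk_add, (eq_zero_iff (N := twoG G) (doubleHom G b)).2 ⟨b, rfl⟩, add_zero]

theorem stmt15 (G : Type*) [AddCommGroup G] [Countable G]
    (h2inf : (twoG G : Set G).Infinite) (hindex : (twoG G).index = 0)
    (Φ : ℕ → Finset G) (hΦ : IsFolner Φ) :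
    ∃ A : Set G,
      Filter.limsup (fun N => ((A ∩ (Φ N : Set G)).ncard : ℝ) / ((Φ N).card : ℝ))
        atTop = 1 ∧
      ∀ t : G, ∀ B : Set G, B.Infinite → ¬ (({t} : Set G) + B + B ⊆ A) := by
  have hker : (doubleHom G).ker.index = 0 := by
    have : Infinite (twoG G) := h2inf.to_subtype
    rw [AddSubgroup.index_ker]
    exact Nat.card_eq_zero_of_infinite (α := twoG G)
  obtain ⟨e, he⟩ := exists_surjective_nat G
  let C (j : ℕ) : Set G := QuotientAddGroup.mk ⁻¹' {(e j : G ⧸ twoG G)} ∪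
    QuotientAddGroup.mk ⁻¹' {(e j : G ⧸ (doubleHom G).ker)}
  obtain ⟨A, hA, hfin⟩ := exists_limsup_relDensity_eq_one_inter_finite hΦ.eventually_nonempty
    Set.monotone_accumulate (tendsto_relDensity_accumulate fun j => tendsto_relDensity_union
      (hΦ.tendsto_relDensity_preimage_mk hindex _) (hΦ.tendsto_relDensity_preimage_mk hker _) :
      ∀ k, Tendsto (relDensity Φ (Set.accumulate C k)) atTop (nhds 0))
  refine ⟨A, hA, fun t B hB => not_singleton_add_add_subset_of_finite_inter_cosets ?_ ?_ t hB⟩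
  · intro c
    obtain ⟨j, rfl⟩ := QuotientAddGroup.mk_surjective.comp he c
    exact (hfin j).subset (Set.inter_subset_inter_right _
      (Set.subset_union_left.trans (Set.subset_accumulate (s := C))))
  · intro c
    obtain ⟨j, rfl⟩ := QuotientAddGroup.mk_surjective.comp he c
    exact (hfin j).subset (Set.inter_subset_inter_right _
      (Set.subset_union_right.trans (Set.subset_accumulate (s := C))))
end

section
/- In the group G = F₃^(ω) (the direct sum of countably many copies of Z/3Z), let Φ_N = {x : xᵢ = 0 for all i > N}, and let A = ⋃_{N≥1} ⋃_{i∈{1}} (Φ_{N−1} + i·e_N) where e_N is the N-th canonical basis vector (i.e., A consists of all x whose last nonzero coordinate equals 1). Then the density of A along Φ equals 1/2, and there is no infinite set B ⊆ G with B + B ⊆ A. -/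
/-!
Read `x ∈ 𝔽₃^(ω)` as the polynomial `∑ xᵢ Xⁱ ∈ 𝔽₃[X]`: then `A` is the set of monic polynomials
and `Φ_N` the set of polynomials of degree at most `N`. Every nonzero element of `𝔽₃` is `±1`, so
for `p ≠ 0` exactly one of `p`, `-p` is monic, whence `|A ∩ Φ_N| = (3^(N+1) - 1) / 2`.
If `B + B ⊆ A`, then `b + b = -b` is monic for every `b ∈ B`, i.e. every `b ∈ B` has leading
coefficient `-1`. As `B` is infinite and each `Φ_N` finite, some `b₁, b₂ ∈ B` have
`deg b₁ < deg b₂`; then `b₁ + b₂` has leading coefficient `-1` and is not monic.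
-/

open Filter Pointwise
open scoped Classical

/-- The group `𝔽₃^(ω)`: finitely supported sequences with values in `ℤ/3ℤ`. -/
abbrev F3omega := ℕ →₀ ZMod 3

/-- `Φ_N = {x : xᵢ = 0 for all i > N}`. -/
def PhiF3 (N : ℕ) : Set F3omega := {x | ∀ i : ℕ, N < i → x i = 0}

/-- `A` consists of all `x` whose last nonzero coordinate equals `1`. -/
def AF3 : Set F3omega := {x | ∃ N : ℕ, x N = 1 ∧ ∀ m : ℕ, N < m → x m = 0}

open Polynomial

namespace Polynomial

variable {R : Type*}

theorem monic_iff_exists_coeff_eq_one [Semiring R] [Nontrivial R] {p : R[X]} :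
    p.Monic ↔ ∃ N, p.coeff N = 1 ∧ ∀ m, N < m → p.coeff m = 0 := by
  refine ⟨fun hp => ⟨p.natDegree, hp, fun m hm => coeff_eq_zero_of_natDegree_lt hm⟩, ?_⟩
  rintro ⟨N, hN, htop⟩
  have hdeg : p.natDegree = N :=
    natDegree_eq_of_le_of_coeff_ne_zero (natDegree_le_iff_coeff_eq_zero.2 htop)
      (hN ▸ one_ne_zero)
  rw [Monic, leadingCoeff, hdeg, hN]

theorem Monic.of_add_of_degree_lt [Semiring R] {p q : R[X]} (hpq : (p + q).Monic)
    (h : p.degree < q.degree) : q.Monic := by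
  rwa [Monic, ← leadingCoeff_add_of_degree_lt h]

theorem Monic.not_monic_neg [Ring R] (hR : (-1 : R) ≠ 1) {p : R[X]} (hp : p.Monic) :
    ¬(-p).Monic := by
  rw [Monic, leadingCoeff_neg, hp.leadingCoeff]
  exact hR

theorem monic_or_monic_neg_of_ne_zero {p : (ZMod 3)[X]} (hp : p ≠ 0) :
    p.Monic ∨ (-p).Monic := by
  have hunit : ∀ a : ZMod 3, a ≠ 0 → a = 1 ∨ a = -1 := by decide
  rcases hunit _ (leadingCoeff_ne_zero.2 hp) with h | h
  · exact Or.inl h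
  · exact Or.inr (by rw [Monic, leadingCoeff_neg, h, neg_neg])

end Polynomial

theorem add_self_eq_neg_of_charP_three {R : Type*} [Ring R] [CharP R 3] (a : R) :
    a + a = -a := by
  have h3 : (3 : R) = 0 := by exact_mod_cast CharP.cast_eq_zero R 3
  rw [eq_neg_iff_add_eq_zero, show a + a + a = 3 * a by noncomm_ring, h3, zero_mul]

theorem Set.ncard_eq_two_mul_ncard_inter_add_one {G : Type*} [AddGroup G] {S A : Set G}
    (hS : S.Finite) (h0S : 0 ∈ S) (hSneg : ∀ x ∈ S, -x ∈ S) (h0A : 0 ∉ A)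
    (hA : ∀ x ∈ S, x ≠ 0 → (x ∈ A ↔ -x ∉ A)) : S.ncard = 2 * (A ∩ S).ncard + 1 := by
  have hsplit : S = insert 0 ((A ∩ S) ∪ -(A ∩ S)) := by
    ext x
    rcases eq_or_ne x 0 with rfl | hx
    · simp [h0S]
    simp only [Set.mem_insert_iff, hx, false_or, Set.mem_union, Set.mem_inter_iff, Set.mem_neg]
    constructor
    · intro hxS
      by_cases hxA : x ∈ A
      · exact Or.inl ⟨hxA, hxS⟩
      · exact Or.inr ⟨not_not.1 (mt (hA x hxS hx).2 hxA), hSneg x hxS⟩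
    · rintro (⟨-, hxS⟩ | ⟨-, hnxS⟩)
      · exact hxS
      · simpa using hSneg _ hnxS
  have hfin : (A ∩ S).Finite := hS.subset Set.inter_subset_right
  have hdisj : Disjoint (A ∩ S) (-(A ∩ S)) := by
    rw [Set.disjoint_left]
    rintro x ⟨hxA, hxS⟩ ⟨hnxA, -⟩
    exact (hA x hxS (fun h => h0A (h ▸ hxA))).1 hxA hnxA
  have h0 : (0 : G) ∉ (A ∩ S) ∪ -(A ∩ S) := by simp [h0A]
  conv_lhs => rw [hsplit]
  rw [Set.ncard_insert_of_notMem h0 (hfin.union hfin.neg),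
    Set.ncard_union_eq hdisj hfin hfin.neg, Set.ncard_neg, two_mul]

theorem tendsto_div_of_eq_two_mul_add_one {a s : ℕ → ℕ} (hs : Tendsto s atTop atTop)
    (h : ∀ N, s N = 2 * a N + 1) :
    Tendsto (fun N => (a N : ℝ) / s N) atTop (nhds (1 / 2)) := by
  have hlim : Tendsto (fun N => (1 - (s N : ℝ)⁻¹) / 2) atTop (nhds ((1 - 0) / 2)) :=
    ((tendsto_inv_atTop_zero.comp (tendsto_natCast_atTop_atTop.comp hs)).const_sub 1).div_const 2
  rw [sub_zero] at hlim
  refine hlim.congr fun N => ?_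
  have hsN : (s N : ℝ) = 2 * a N + 1 := by exact_mod_cast h N
  rw [hsN]
  field_simp
  ring

noncomputable def toPoly : F3omega ≃+ (ZMod 3)[X] :=
  AddMonoidAlgebra.coeffAddEquiv.symm.trans (toFinsuppIso (ZMod 3)).symm.toAddEquiv

@[simp]
theorem coeff_toPoly (x : F3omega) (n : ℕ) : (toPoly x).coeff n = x n := rfl

theorem mem_AF3_iff_monic {x : F3omega} : x ∈ AF3 ↔ (toPoly x).Monic := by
  simp [AF3, monic_iff_exists_coeff_eq_one]

theorem mem_PhiF3_iff {N : ℕ} {x : F3omega} : x ∈ PhiF3 N ↔ (toPoly x).natDegree ≤ N := by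
  simp only [PhiF3, Set.mem_ofPred_eq, natDegree_le_iff_coeff_eq_zero, coeff_toPoly]

theorem ncard_PhiF3 (N : ℕ) : (PhiF3 N).ncard = 3 ^ (N + 1) := by
  have : PhiF3 N = toPoly ⁻¹' (degreeLT (ZMod 3) (N + 1) : Set (ZMod 3)[X]) := by
    ext x
    rw [Set.mem_preimage, SetLike.mem_coe, mem_degreeLT, degree_lt_iff_coeff_zero]
    simp only [PhiF3, Set.mem_ofPred_eq, coeff_toPoly, Nat.lt_iff_add_one_le]
  rw [this, Set.ncard_preimage_of_injective_subset_range toPoly.injective (by simp),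
    ← Nat.card_coe_set_eq]
  exact (Nat.card_congr (degreeLTEquiv (ZMod 3) (N + 1)).toEquiv).trans (by simp)

theorem finite_PhiF3 (N : ℕ) : (PhiF3 N).Finite :=
  Set.finite_of_ncard_pos (by rw [ncard_PhiF3]; positivity)

theorem ncard_PhiF3_eq_two_mul_add_one (N : ℕ) :
    (PhiF3 N).ncard = 2 * (AF3 ∩ PhiF3 N).ncard + 1 := by
  refine Set.ncard_eq_two_mul_ncard_inter_add_one (finite_PhiF3 N) (fun _ _ => rfl)
    (fun x hx i hi => by simp [hx i hi]) ?_ fun x _ hx => ?_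
  · simp [mem_AF3_iff_monic, Monic]
  · rw [mem_AF3_iff_monic, mem_AF3_iff_monic, map_neg]
    have hp : toPoly x ≠ 0 := toPoly.map_ne_zero_iff.2 hx
    exact ⟨fun h => h.not_monic_neg (by decide),
      fun h => (monic_or_monic_neg_of_ne_zero hp).resolve_right h⟩

theorem not_add_subset_AF3 {B : Set F3omega} (hB : B.Infinite) : ¬B + B ⊆ AF3 := by
  intro hBB
  have hneg : ∀ b ∈ B, (-toPoly b).Monic := fun b hb => by
    rw [← add_self_eq_neg_of_charP_three, ← map_add, ← mem_AF3_iff_monic]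
    exact hBB (Set.add_mem_add hb hb)
  obtain ⟨b₁, hb₁⟩ := hB.nonempty
  obtain ⟨b₂, hb₂, hb₂Φ⟩ := Set.not_subset.1 fun h =>
    hB ((finite_PhiF3 (toPoly b₁).natDegree).subset h)
  have hdeg : (toPoly b₁).degree < (toPoly b₂).degree :=
    degree_lt_degree (not_le.1 (mt mem_PhiF3_iff.2 hb₂Φ))
  have hmonic : (toPoly b₁ + toPoly b₂).Monic := by
    rw [← map_add, ← mem_AF3_iff_monic]
    exact hBB (Set.add_mem_add hb₁ hb₂)
  exact (hmonic.of_add_of_degree_lt hdeg).not_monic_neg (by decide) (hneg b₂ hb₂)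

theorem stmt16 :
    Tendsto (fun N => ((AF3 ∩ PhiF3 N).ncard : ℝ) / ((PhiF3 N).ncard : ℝ))
      atTop (nhds (1 / 2)) ∧
    ∀ B : Set F3omega, B.Infinite → ¬ (B + B ⊆ AF3) := by
  refine ⟨tendsto_div_of_eq_two_mul_add_one ?_ ncard_PhiF3_eq_two_mul_add_one,
    fun _ => not_add_subset_AF3⟩
  simp only [ncard_PhiF3]
  exact (tendsto_pow_atTop_atTop_of_one_lt (by norm_num)).comp (tendsto_add_atTop_nat 1)
end

section
/- Let A' ⊆ ℕ be a set such that whenever B' + B' + t' ⊆ A' for some B' ⊆ ℕ and t' ∈ ℕ, the set B' is finite. Define A = {x ∈ ℤ^d : ‖x‖_∞ ∈ A'}. Then whenever B + B + t ⊆ A for some B ⊆ ℤ^d and t ∈ ℤ^d, the set B is finite. -/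
open Filter Pointwise
open scoped Classical

/-!
If `B` is infinite, pigeonholing gives an infinite `C ⊆ B`, far from the origin, on which both the
sign pattern of the coordinates and the gaps `‖b‖ - |b j|` capped at `T + 1`, where `T = ‖t‖`, are
constant. For `b, b' ∈ C` a coordinate with gap `g ≤ T` has the same sign in `b` and `b'`, so
`|b j + b' j + t j| = ‖b‖ + ‖b'‖ - 2 g ± t j`, while coordinates with larger gap are too small to
reach the maximum. Hence `‖b + b' + t‖ = ‖b‖ + ‖b'‖ + s` with `s` independent of `b, b'`, so that
`B' = {‖b‖ - T : b ∈ C}` and `t' = s + 2T` satisfy `B' + B' + t' ⊆ A'`. Thus `B'` is finite, and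
so is `C`, because balls of `ℤ^d` are finite.
-/

theorem Set.Infinite.exists_infinite_fiber {α β : Type*} [Finite β] {s : Set α}
    (hs : s.Infinite) (f : α → β) : ∃ y, {x ∈ s | f x = y}.Infinite := by
  by_contra! h
  exact hs ((Set.finite_iUnion h).subset fun x hx => Set.mem_iUnion.2 ⟨f x, hx, rfl⟩)

section SupNorm

variable {ι : Type*} [Fintype ι]

def supNorm (x : ι → ℤ) : ℕ := Finset.univ.sup fun i => (x i).natAbs

theorem natAbs_le_supNorm (x : ι → ℤ) (i : ι) : (x i).natAbs ≤ supNorm x :=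
  Finset.le_sup (f := fun i => (x i).natAbs) (Finset.mem_univ i)

theorem abs_le_supNorm (x : ι → ℤ) (i : ι) : |x i| ≤ supNorm x := by
  rw [← Int.natCast_natAbs]
  exact_mod_cast natAbs_le_supNorm x i

theorem exists_natAbs_eq_supNorm {x : ι → ℤ} (hx : 0 < supNorm x) :
    ∃ i, (x i).natAbs = supNorm x := by
  have hne : (Finset.univ : Finset ι).Nonempty := by
    by_contra h
    simp_all [supNorm, Finset.not_nonempty_iff_eq_empty.1 h]
  obtain ⟨i, -, hi⟩ := Finset.exists_mem_eq_sup Finset.univ hne fun i => (x i).natAbs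
  exact ⟨i, hi.symm⟩

theorem supNorm_eq_of_forall_le_of_exists_eq {x : ι → ℤ} {n : ℤ} (hle : ∀ i, |x i| ≤ n)
    (heq : ∃ i, |x i| = n) : (supNorm x : ℤ) = n := by
  obtain ⟨i, hi⟩ := heq
  refine le_antisymm ?_ (hi ▸ abs_le_supNorm x i)
  lift n to ℕ using hi ▸ abs_nonneg (x i)
  refine Nat.cast_le.2 (Finset.sup_le fun j _ => ?_)
  have := hle j
  rw [← Int.natCast_natAbs] at this
  exact_mod_cast this

theorem finite_setOf_supNorm_le (M : ℕ) : {x : ι → ℤ | supNorm x ≤ M}.Finite := by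
  refine (Set.Finite.pi fun _ => Set.finite_Icc (-(M : ℤ)) M).subset fun x hx i _ => ?_
  exact abs_le.1 ((abs_le_supNorm x i).trans (by exact_mod_cast hx))

end SupNorm

def boolSign (ε : Bool) : ℤ := if ε then 1 else -1

theorem boolSign_decide_mul_abs (x : ℤ) : boolSign (decide (0 ≤ x)) * |x| = x := by
  by_cases hx : 0 ≤ x <;> simp [boolSign, hx, abs_of_nonneg, abs_of_neg, not_le.1]

theorem abs_boolSign_mul (ε : Bool) (τ : ℤ) : |boolSign ε * τ| = |τ| := by
  cases ε <;> simp [boolSign]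

theorem abs_boolSign_mul_add (ε : Bool) {m τ : ℤ} (h : |τ| ≤ m) :
    |boolSign ε * m + τ| = m + boolSign ε * τ := by
  obtain ⟨h₁, h₂⟩ := abs_le.1 h
  cases ε
  · rw [abs_of_nonpos (by simp [boolSign]; linarith)]
    simp [boolSign]
    ring
  · rw [abs_of_nonneg (by simp [boolSign]; linarith)]
    simp [boolSign]

section Profile

variable {ι : Type*} [Fintype ι]

def profile (K : ℕ) (x : ι → ℤ) : (ι → Bool) × (ι → Fin (K + 1)) :=
  (fun j => decide (0 ≤ x j), fun j => ⟨min (supNorm x - (x j).natAbs) K, by omega⟩)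

theorem boolSign_profile_mul_abs (K : ℕ) (x : ι → ℤ) (j : ι) :
    boolSign ((profile K x).1 j) * |x j| = x j :=
  boolSign_decide_mul_abs (x j)

theorem abs_eq_supNorm_sub_profile {K : ℕ} {x : ι → ℤ} {j : ι} (h : ((profile K x).2 j : ℕ) < K) :
    |x j| = supNorm x - ((profile K x).2 j : ℕ) := by
  have := natAbs_le_supNorm x j
  simp only [profile] at h ⊢
  rw [← Int.natCast_natAbs]
  omega

theorem abs_add_le_supNorm_of_profile {K : ℕ} {x : ι → ℤ} {j : ι}
    (h : ¬ ((profile K x).2 j : ℕ) < K) : |x j| + K ≤ supNorm x := by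
  have := natAbs_le_supNorm x j
  simp only [profile] at h
  rw [← Int.natCast_natAbs]
  omega

/-- Bound for `|b j + b' j + t j| - ‖b‖ - ‖b'‖` over `b, b'` of profile `p`. At a gap `> T` it is
`-T - 2`, below the value `≥ -T` at a coordinate of gap `0`, so the maximum is exact. -/
def offset (T : ℕ) (t : ι → ℤ) (p : (ι → Bool) × (ι → Fin (T + 1 + 1))) (j : ι) : ℤ :=
  if (p.2 j : ℕ) < T + 1 then boolSign (p.1 j) * t j - 2 * (p.2 j : ℕ) else -T - 2

variable {T : ℕ} {t : ι → ℤ} {b b' : ι → ℤ}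

theorem abs_add_add_eq_offset (ht : supNorm t ≤ T) (hb : 2 * T < supNorm b)
    (hb' : 2 * T < supNorm b') (hp : profile (T + 1) b' = profile (T + 1) b) {j : ι}
    (hj : ((profile (T + 1) b).2 j : ℕ) < T + 1) :
    |b j + b' j + t j| = supNorm b + supNorm b' + offset T t (profile (T + 1) b) j := by
  set p := profile (T + 1) b
  have hgap := abs_eq_supNorm_sub_profile hj
  have hgap' := abs_eq_supNorm_sub_profile (hp ▸ hj)
  have hsum : b j + b' j + t j =
      boolSign (p.1 j) * (supNorm b + supNorm b' - 2 * (p.2 j : ℕ)) + t j := by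
    rw [← boolSign_profile_mul_abs (T + 1) b j, ← boolSign_profile_mul_abs (T + 1) b' j, hgap,
      hgap', hp]
    ring
  rw [hsum, abs_boolSign_mul_add, offset, if_pos hj]
  · ring
  · have := (abs_le_supNorm t j).trans (Nat.cast_le.2 ht)
    omega

theorem abs_add_add_le_offset (ht : supNorm t ≤ T) (hb : 2 * T < supNorm b)
    (hb' : 2 * T < supNorm b') (hp : profile (T + 1) b' = profile (T + 1) b) (j : ι) :
    |b j + b' j + t j| ≤ supNorm b + supNorm b' + offset T t (profile (T + 1) b) j := by
  by_cases hj : ((profile (T + 1) b).2 j : ℕ) < T + 1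
  · exact (abs_add_add_eq_offset ht hb hb' hp hj).le
  · have h := abs_add_le_supNorm_of_profile hj
    have h' := abs_add_le_supNorm_of_profile (hp ▸ hj)
    have := (abs_le_supNorm t j).trans (Nat.cast_le.2 ht)
    rw [offset, if_neg hj]
    push_cast at h h'
    linarith [abs_add_three (b j) (b' j) (t j)]

theorem exists_supNorm_add_add_eq (ht : supNorm t ≤ T) {p : (ι → Bool) × (ι → Fin (T + 1 + 1))}
    {C : Set (ι → ℤ)} (hC : ∀ b ∈ C, profile (T + 1) b = p ∧ 2 * T < supNorm b)
    (hne : C.Nonempty) :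
    ∃ s : ℤ, -(T : ℤ) ≤ s ∧
      ∀ b ∈ C, ∀ b' ∈ C, (supNorm (b + b' + t) : ℤ) = supNorm b + supNorm b' + s := by
  obtain ⟨b₀, hb₀⟩ := hne
  obtain ⟨rfl, hfar₀⟩ := hC b₀ hb₀
  obtain ⟨j₀, hj₀⟩ := exists_natAbs_eq_supNorm (x := b₀) (by omega)
  have hgap₀ : ((profile (T + 1) b₀).2 j₀ : ℕ) = 0 := by simp [profile, hj₀]
  obtain ⟨j, -, hmax⟩ :=
    Finset.univ.exists_max_image (offset T t (profile (T + 1) b₀)) ⟨j₀, Finset.mem_univ _⟩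
  have hs : -(T : ℤ) ≤ offset T t (profile (T + 1) b₀) j := by
    refine le_trans ?_ (hmax j₀ (Finset.mem_univ _))
    rw [offset, if_pos (by omega), hgap₀, Nat.cast_zero, mul_zero, sub_zero]
    linarith [neg_abs_le (boolSign ((profile (T + 1) b₀).1 j₀) * t j₀),
      abs_boolSign_mul ((profile (T + 1) b₀).1 j₀) (t j₀), abs_le_supNorm t j₀,
      (Nat.cast_le (α := ℤ)).2 ht]
  have hj : ((profile (T + 1) b₀).2 j : ℕ) < T + 1 := by
    by_contra h
    rw [offset, if_neg h] at hs
    omega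
  refine ⟨_, hs, fun b hb b' hb' => ?_⟩
  obtain ⟨hp, hfar⟩ := hC b hb
  obtain ⟨hp', hfar'⟩ := hC b' hb'
  rw [← hp] at hp' hmax hj ⊢
  apply supNorm_eq_of_forall_le_of_exists_eq
  · intro i
    exact (abs_add_add_le_offset ht hfar hfar' hp' i).trans
      (by linarith [hmax i (Finset.mem_univ _)])
  · exact ⟨j, abs_add_add_eq_offset ht hfar hfar' hp' hj⟩

end Profile

theorem stmt17 (d : ℕ) (A' : Set ℕ)
    (hA' : ∀ (B' : Set ℕ) (t' : ℕ), B' + B' + ({t'} : Set ℕ) ⊆ A' → B'.Finite)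
    (B : Set (Fin d → ℤ)) (t : Fin d → ℤ)
    (hB : B + B + ({t} : Set (Fin d → ℤ)) ⊆
      {x : Fin d → ℤ | (Finset.univ.sup (fun i => (x i).natAbs)) ∈ A'}) :
    B.Finite := by
  by_contra hinf
  set T := supNorm t
  obtain ⟨p, hC⟩ := ((Set.not_finite.1 hinf).sdiff
    (finite_setOf_supNorm_le (2 * T))).exists_infinite_fiber (profile (T + 1))
  set C := {b ∈ B \ {x | supNorm x ≤ 2 * T} | profile (T + 1) b = p}
  have hfar : ∀ b ∈ C, 2 * T < supNorm b := fun b hb => not_le.1 hb.1.2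
  obtain ⟨s, hs₀, hs⟩ := exists_supNorm_add_add_eq le_rfl (C := C)
    (fun b hb => ⟨hb.2, hfar b hb⟩) hC.nonempty
  have hsub : (fun b => supNorm b - T) '' C + (fun b => supNorm b - T) '' C +
      {(s + 2 * T).toNat} ⊆ A' := by
    rintro _ ⟨_, ⟨_, ⟨b, hb, rfl⟩, _, ⟨b', hb', rfl⟩, rfl⟩, _, rfl, rfl⟩
    have hmem : supNorm (b + b' + t) ∈ A' :=
      hB (Set.add_mem_add (Set.add_mem_add hb.1.1 hb'.1.1) rfl)
    convert hmem using 1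
    have := hs b hb b' hb'
    have := hfar b hb
    have := hfar b' hb'
    dsimp only
    omega
  obtain ⟨M, hM⟩ := (hA' _ _ hsub).bddAbove
  refine hC ((finite_setOf_supNorm_le (M + T)).subset fun b hb => ?_)
  have : supNorm b - T ≤ M := hM ⟨b, hb, rfl⟩
  show supNorm b ≤ M + T
  omega
end

section
/- Let G = (ℤ(1/2)/ℤ)^d be the d-fold product of the Prüfer 2-group of dyadic rationals mod 1. Let F_N = {k/2^N mod 1 : 0 ≤ k < 2^N}, Φ_N = F_N^d, and A = ⋃_{n≥0} (Φ_{2n+1} \ Φ_{2n}). Then if B + B ⊆ A for some B ⊆ G, the set B is finite. -/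
open Filter Pointwise
open scoped Classical

/-- The group `ℚ/ℤ`. -/
abbrev QmodZ := ℚ ⧸ AddSubgroup.zmultiples (1 : ℚ)

/-- The Prüfer 2-group `ℤ(1/2)/ℤ`, realized as the 2-primary component of `ℚ/ℤ`. -/
noncomputable abbrev DyadicPrufer : AddSubgroup QmodZ :=
  AddCommGroup.primaryComponent QmodZ 2

/-- `Φ_N = F_N^d`, where `F_N = {k/2^N mod 1 : 0 ≤ k < 2^N}` is the set of elements
killed by `2^N`. -/
def PhiDyadic (d N : ℕ) : Set (Fin d → DyadicPrufer) := {y | (2 ^ N : ℕ) • y = 0}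

/-- `A = ⋃_{n ≥ 0} (Φ_{2n+1} \ Φ_{2n})`. -/
def ADyadic (d : ℕ) : Set (Fin d → DyadicPrufer) :=
  ⋃ n : ℕ, PhiDyadic d (2 * n + 1) \ PhiDyadic d (2 * n)

/-!
Let `w y` be the least `n` with `2 ^ n • y = 0`, so that `A = {y | w y odd}`. Since
`w (y + y) = w y - 1`, every `b ∈ B` has `w b` even, as `b + b ∈ A`. Since `w (y + y') = w y`
whenever `w y' < w y`, two elements of `B` with different `w` would have a sum outside `A`.
Hence `w` is constant on `B`, say equal to `N`, and `B ⊆ Φ_N`, which is finite.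
-/

section TwoExponent

variable {M : Type*} [AddCommMonoid M]

/-- For `y ∈ G^d` this is the paper's `w(y) = max_j θ(y_j)`. It is the junk value `0` when no
power of `2` kills `y`. -/
noncomputable def twoExponent (y : M) : ℕ := sInf {n | (2 ^ n : ℕ) • y = 0}

theorem twoExponent_le_iff {y : M} (hy : ∃ n, (2 ^ n : ℕ) • y = 0) {N : ℕ} :
    twoExponent y ≤ N ↔ (2 ^ N : ℕ) • y = 0 := by
  refine ⟨fun h => ?_, fun h => Nat.sInf_le h⟩
  have hmin : (2 ^ twoExponent y : ℕ) • y = 0 := Nat.sInf_mem hy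
  rw [← Nat.sub_add_cancel h, pow_add, mul_nsmul', hmin, nsmul_zero]

theorem twoExponent_add_self {y : M} (hy : ∃ n, (2 ^ n : ℕ) • y = 0) :
    twoExponent (y + y) = twoExponent y - 1 := by
  have hyy : ∃ n, (2 ^ n : ℕ) • (y + y) = 0 := by
    obtain ⟨n, hn⟩ := hy
    exact ⟨n, by rw [nsmul_add, hn, add_zero]⟩
  have key : ∀ N, twoExponent (y + y) ≤ N ↔ twoExponent y ≤ N + 1 := fun N => by
    rw [twoExponent_le_iff hyy, twoExponent_le_iff hy, ← two_nsmul, pow_succ, mul_nsmul']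
  have h₁ := (key (twoExponent (y + y))).1 le_rfl
  have h₂ := (key (twoExponent y - 1)).2 (by omega)
  omega

theorem even_twoExponent_of_odd_add_self {y : M} (hy : ∃ n, (2 ^ n : ℕ) • y = 0)
    (h : Odd (twoExponent (y + y))) : Even (twoExponent y) := by
  rw [twoExponent_add_self hy] at h
  obtain ⟨k, hk⟩ := h
  exact ⟨k + 1, by omega⟩

end TwoExponent

section AddCommGroup

variable {G : Type*} [AddCommGroup G] {y y' : G}

theorem twoExponent_add_of_lt (hy : ∃ n, (2 ^ n : ℕ) • y = 0)
    (hy' : ∃ n, (2 ^ n : ℕ) • y' = 0)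
    (h : twoExponent y' < twoExponent y) : twoExponent (y + y') = twoExponent y := by
  have hsum : (2 ^ twoExponent y : ℕ) • (y + y') = 0 := by
    rw [nsmul_add, (twoExponent_le_iff hy).1 le_rfl, (twoExponent_le_iff hy').1 h.le, add_zero]
  refine le_antisymm (Nat.sInf_le hsum) ?_
  by_contra! hlt
  have h₁ := (twoExponent_le_iff ⟨_, hsum⟩).1 (Nat.le_sub_one_of_lt hlt)
  have h₂ := (twoExponent_le_iff hy').1 (Nat.le_sub_one_of_lt h)
  rw [nsmul_add, h₂, add_zero, ← twoExponent_le_iff hy] at h₁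
  omega

theorem twoExponent_eq_of_odd_twoExponent_add (hy : ∃ n, (2 ^ n : ℕ) • y = 0)
    (hy' : ∃ n, (2 ^ n : ℕ) • y' = 0)
    (hyy : Odd (twoExponent (y + y))) (hy'y' : Odd (twoExponent (y' + y')))
    (hyy' : Odd (twoExponent (y + y'))) : twoExponent y = twoExponent y' := by
  rcases lt_trichotomy (twoExponent y) (twoExponent y') with hlt | heq | hgt
  · rw [add_comm, twoExponent_add_of_lt hy' hy hlt] at hyy'
    exact absurd (even_twoExponent_of_odd_add_self hy' hy'y') (Nat.not_even_iff_odd.2 hyy')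
  · exact heq
  · rw [twoExponent_add_of_lt hy hy' hgt] at hyy'
    exact absurd (even_twoExponent_of_odd_add_self hy hyy) (Nat.not_even_iff_odd.2 hyy')

end AddCommGroup

theorem Pi.exists_two_pow_nsmul_eq_zero {ι M : Type*} [Finite ι] [AddMonoid M]
    (h : ∀ x : M, ∃ n, (2 ^ n : ℕ) • x = 0) (y : ι → M) : ∃ n, (2 ^ n : ℕ) • y = 0 := by
  have := Fintype.ofFinite ι
  choose n hn using fun i => h (y i)
  refine ⟨Finset.univ.sup n, funext fun i => addOrderOf_dvd_iff_nsmul_eq_zero.1 ?_⟩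
  exact (addOrderOf_dvd_iff_nsmul_eq_zero.2 (hn i)).trans
    (pow_dvd_pow 2 (Finset.le_sup (Finset.mem_univ i)))

theorem DyadicPrufer.exists_two_pow_nsmul_eq_zero (x : DyadicPrufer) :
    ∃ n, (2 ^ n : ℕ) • x = 0 := by
  obtain ⟨n, hn⟩ := AddCommGroup.mem_primaryComponent.1 x.2
  exact ⟨n, Subtype.ext hn⟩

theorem mem_ADyadic_iff {d : ℕ} {y : Fin d → DyadicPrufer} :
    y ∈ ADyadic d ↔ Odd (twoExponent y) := by
  have hy := Pi.exists_two_pow_nsmul_eq_zero DyadicPrufer.exists_two_pow_nsmul_eq_zero y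
  simp only [ADyadic, PhiDyadic, Set.mem_iUnion, Set.mem_sdiff, Set.mem_ofPred_eq,
    ← twoExponent_le_iff hy]
  constructor
  · rintro ⟨n, h₁, h₂⟩
    exact ⟨n, by omega⟩
  · rintro ⟨n, hn⟩
    exact ⟨n, by omega, by omega⟩

theorem QmodZ.finite_setOf_nsmul_eq_zero {n : ℕ} (hn : n ≠ 0) :
    {x : QmodZ | n • x = 0}.Finite := by
  have : NeZero n := ⟨hn⟩
  let f : ℤ →+ QmodZ := (QuotientAddGroup.mk' _).comp (zmultiplesHom ℚ (n : ℚ)⁻¹)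
  have hf : f n = 0 := by simp [f, hn]
  refine (Set.finite_range (ZMod.lift n ⟨f, hf⟩)).subset fun x hx => ?_
  obtain ⟨q, rfl⟩ := QuotientAddGroup.mk_surjective x
  obtain ⟨m, hm⟩ := AddSubgroup.mem_zmultiples_iff.1 ((QuotientAddGroup.eq_zero_iff _).1 hx)
  refine ⟨m, ?_⟩
  simp only [zsmul_eq_mul, mul_one, nsmul_eq_mul] at hm
  simp only [ZMod.lift_coe, f, AddMonoidHom.coe_comp, Function.comp_apply, zmultiplesHom_apply,
    QuotientAddGroup.mk'_apply, zsmul_eq_mul, hm]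
  field_simp

theorem AddSubgroup.finite_setOf_nsmul_eq_zero {G : Type*} [AddGroup G] (H : AddSubgroup G)
    {n : ℕ} (h : {x : G | n • x = 0}.Finite) : {x : H | n • x = 0}.Finite :=
  (h.preimage Subtype.val_injective.injOn).subset fun x (hx : n • x = 0) => by
    rw [Set.mem_preimage, Set.mem_ofPred_eq, ← AddSubgroup.coe_nsmul, hx, AddSubgroup.coe_zero]

theorem Pi.finite_setOf_nsmul_eq_zero {ι M : Type*} [Finite ι] [AddMonoid M] {n : ℕ}
    (h : {x : M | n • x = 0}.Finite) : {y : ι → M | n • y = 0}.Finite :=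
  (Set.Finite.pi fun _ => h).subset fun _ hy i _ => congrFun hy i

theorem finite_PhiDyadic (d N : ℕ) : (PhiDyadic d N).Finite :=
  Pi.finite_setOf_nsmul_eq_zero <| AddSubgroup.finite_setOf_nsmul_eq_zero _ <|
    QmodZ.finite_setOf_nsmul_eq_zero (pow_ne_zero N two_ne_zero)

theorem stmt18 (d : ℕ) (B : Set (Fin d → DyadicPrufer)) (hB : B + B ⊆ ADyadic d) :
    B.Finite := by
  rcases B.eq_empty_or_nonempty with rfl | ⟨b₀, hb₀⟩
  · exact Set.finite_empty
  have htors := Pi.exists_two_pow_nsmul_eq_zero (ι := Fin d)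
    DyadicPrufer.exists_two_pow_nsmul_eq_zero
  have hodd : ∀ b ∈ B, ∀ b' ∈ B, Odd (twoExponent (b + b')) := fun b hb b' hb' =>
    mem_ADyadic_iff.1 (hB (Set.add_mem_add hb hb'))
  refine (finite_PhiDyadic d (twoExponent b₀)).subset fun b hb => ?_
  rw [PhiDyadic, Set.mem_ofPred_eq, ← twoExponent_le_iff (htors b)]
  exact (twoExponent_eq_of_odd_twoExponent_add (htors b) (htors b₀) (hodd b hb b hb)
    (hodd b₀ hb₀ b₀ hb₀) (hodd b hb b₀ hb₀)).le
end

section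
/- Let G be a countable abelian group with 2G infinite and let Φ be a Følner sequence in G that is not quasi-invariant with respect to doubling (i.e., lim inf |Φ_N/2 ∩ Φ_N|/|Φ_N| = 0). Then there exists A ⊆ G with upper density 1 along Φ such that for every t ∈ G and every infinite B ⊆ G, t + B + B is not contained in A. -/
/-!
Pick Følner sets `Φ_{N_0}, Φ_{N_1}, …` one after another with `N_n ≥ n`. Let `F_n` be the union of
the earlier ones and let `A_n` be `Φ_{N_n}` minus the points `x` with `2x ∈ F_n + F_n` or
`x = 2w - f` for some `f ∈ F_n`, `w ∈ F_n ∪ Φ_{N_n}`. Fibres of doubling have density zero because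
`2G` is infinite, finite sets have density zero, Følner sets are almost translation invariant, and
`Φ_N` is frequently almost disjoint from `Φ_N / 2`; so `N_n` can be chosen with at most a
`1/(n+1)` share of `Φ_{N_n}` removed, and `A = ⋃ A_n` has upper density 1.

If `t + B + B ⊆ A` with `B` infinite and `b ↦ t + 2b` takes infinitely many values on `B`, choose
`b, b' ∈ B` with `t + 2b'` entering `A` at a later stage than `t + 2b`; whichever of `t + 2b'` and
`t + b + b'` enters last is a removed point, by `2(t + b + b') = (t + 2b) + (t + 2b')` or
`t + 2b' = 2(t + b + b') - (t + 2b)`. Otherwise `t + 2b = a` on an infinite part of `B`, and the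
infinitely many points `t + b₀ + b` built from it satisfy `2(t + b₀ + b) = a + a`, so one of them
entering after `a` is removed.
-/

open Filter Pointwise
open scoped Classical

open scoped Topology
namespace IsFolner

variable {G : Type*} [AddCommGroup G] {Φ : ℕ → Finset G}

lemma eventually_card_pos (hΦ : IsFolner Φ) : ∀ᶠ N in atTop, 0 < (Φ N).card := by
  filter_upwards [(hΦ 0).eventually (eventually_gt_nhds one_pos)] with N hN
  by_contra! h
  simp [Nat.le_zero.1 h] at hN

lemma tendsto_card_image_sdiff (hΦ : IsFolner Φ) (g : G) :
    Tendsto (fun N => (((Φ N).image (g + ·) \ Φ N).card : ℝ) / (Φ N).card) atTop (𝓝 0) := by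
  have h := (tendsto_const_nhds (x := (1 : ℝ))).sub (hΦ g)
  rw [sub_self] at h
  refine h.congr' ?_
  filter_upwards [hΦ.eventually_card_pos] with N hN
  have hcard : ((Φ N).image (g + ·) \ Φ N).card + (Φ N ∩ (Φ N).image (g + ·)).card
      = (Φ N).card := by
    rw [Finset.inter_comm, Finset.card_sdiff_add_card_inter,
      Finset.card_image_of_injective _ (add_right_injective g)]
  have hpos : ((Φ N).card : ℝ) ≠ 0 := by positivity
  rw [eq_div_iff hpos, sub_mul, one_mul, div_mul_cancel₀ _ hpos, ← hcard]
  push_cast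
  ring

end IsFolner

section Fibers

variable {G H : Type*} [AddCommGroup G] [AddCommGroup H]

/-- The translates `u + T`, `u ∈ U`, of the fibre `T = s ∩ φ⁻¹{z}` are pairwise disjoint, and each
lies in `s` up to `(u + s) \ s`. -/
lemma card_mul_card_fiber_le (s U : Finset G) (φ : G →+ H) (hU : Set.InjOn φ U) (z : H) :
    U.card * (s.filter (φ · = z)).card ≤ s.card + ∑ u ∈ U, (s.image (u + ·) \ s).card := by
  set T := s.filter (φ · = z)
  have hdisj : (U : Set G).PairwiseDisjoint (fun u => T.image (u + ·)) := by
    intro u hu v hv huv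
    rw [Function.onFun, Finset.disjoint_left]
    rintro _ hx hy
    obtain ⟨a, ha, rfl⟩ := Finset.mem_image.1 hx
    obtain ⟨b, hb, hab⟩ := Finset.mem_image.1 hy
    refine huv (hU hu hv ?_)
    have := congrArg φ hab
    rwa [map_add, map_add, (Finset.mem_filter.1 ha).2, (Finset.mem_filter.1 hb).2,
      add_left_inj, eq_comm] at this
  have hcover : U.biUnion (fun u => T.image (u + ·)) ⊆
      s ∪ U.biUnion (fun u => s.image (u + ·) \ s) := by
    intro y hy
    obtain ⟨u, hu, hy⟩ := Finset.mem_biUnion.1 hy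
    obtain ⟨a, ha, rfl⟩ := Finset.mem_image.1 hy
    by_cases h : u + a ∈ s
    · exact Finset.mem_union_left _ h
    · refine Finset.mem_union_right _ (Finset.mem_biUnion.2 ⟨u, hu, Finset.mem_sdiff.2 ⟨?_, h⟩⟩)
      exact Finset.mem_image_of_mem _ (Finset.filter_subset _ _ ha)
  calc U.card * T.card = (U.biUnion fun u => T.image (u + ·)).card := by
        rw [Finset.card_biUnion hdisj, Finset.sum_congr rfl fun u _ =>
          Finset.card_image_of_injective T (add_right_injective u), Finset.sum_const, smul_eq_mul]
    _ ≤ (s ∪ U.biUnion fun u => s.image (u + ·) \ s).card := Finset.card_le_card hcover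
    _ ≤ s.card + (U.biUnion fun u => s.image (u + ·) \ s).card := Finset.card_union_le _ _
    _ ≤ s.card + ∑ u ∈ U, (s.image (u + ·) \ s).card := by gcongr; exact Finset.card_biUnion_le

variable {Φ : ℕ → Finset G}

lemma IsFolner.tendsto_card_fiber (hΦ : IsFolner Φ) (φ : G →+ H)
    (hφ : (Set.range φ).Infinite) (z : H) :
    Tendsto (fun N => (((Φ N).filter (φ · = z)).card : ℝ) / (Φ N).card) atTop (𝓝 0) := by
  refine tendsto_order.2 ⟨fun a ha => Eventually.of_forall fun N => ha.trans_le (by positivity),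
    fun ε hε => ?_⟩
  obtain ⟨k, hk⟩ := exists_nat_gt (2 / ε)
  have hk0 : (0 : ℝ) < k := (div_pos two_pos hε).trans hk
  obtain ⟨V, hVφ, hVk⟩ := hφ.exists_subset_card_eq k
  obtain ⟨U, -, hUinj, hUV⟩ := Finset.exists_subset_injOn_image_eq_of_surjOn Set.univ V
    (by rwa [Set.SurjOn, Set.image_univ])
  have hUk : U.card = k := by rw [← hVk, ← hUV, Finset.card_image_of_injOn hUinj]
  have hsmall : ∀ᶠ N in atTop, ∀ u ∈ U,
      (((Φ N).image (u + ·) \ Φ N).card : ℝ) / (Φ N).card < 1 / k :=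
    (Filter.eventually_all_finset U).2 fun u _ =>
      (hΦ.tendsto_card_image_sdiff u).eventually (eventually_lt_nhds (by positivity))
  filter_upwards [hΦ.eventually_card_pos, hsmall] with N hN hu
  have hpos : (0 : ℝ) < (Φ N).card := by exact_mod_cast hN
  have hcount : (k : ℝ) * ((Φ N).filter (φ · = z)).card
      ≤ (Φ N).card + ∑ u ∈ U, (((Φ N).image (u + ·) \ Φ N).card : ℝ) := by
    rw [← hUk]; exact_mod_cast card_mul_card_fiber_le (Φ N) U φ hUinj z
  have hsum : ∑ u ∈ U, (((Φ N).image (u + ·) \ Φ N).card : ℝ) ≤ (Φ N).card :=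
    calc ∑ u ∈ U, (((Φ N).image (u + ·) \ Φ N).card : ℝ)
        ≤ ∑ _u ∈ U, 1 / k * ((Φ N).card : ℝ) :=
          Finset.sum_le_sum fun u hu' => ((div_lt_iff₀ hpos).1 (hu u hu')).le
      _ = (Φ N).card := by rw [Finset.sum_const, hUk, nsmul_eq_mul]; field_simp
  have hεk : 2 < k * ε := (div_lt_iff₀ hε).1 hk
  rw [div_lt_iff₀ hpos]
  refine lt_of_mul_lt_mul_left ?_ hk0.le
  nlinarith

lemma IsFolner.tendsto_card_filter_mem (hΦ : IsFolner Φ) (φ : G →+ H)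
    (hφ : (Set.range φ).Infinite) (Z : Finset H) :
    Tendsto (fun N => (((Φ N).filter (φ · ∈ Z)).card : ℝ) / (Φ N).card) atTop (𝓝 0) := by
  have h := tendsto_finsetSum Z fun z _ => hΦ.tendsto_card_fiber φ hφ z
  rw [Finset.sum_const_zero] at h
  refine h.congr fun N => ?_
  rw [← Finset.sum_div, Finset.card_eq_sum_card_fiberwise (s := (Φ N).filter (φ · ∈ Z)) (f := φ)
    fun x hx => (Finset.mem_filter.1 hx).2, Nat.cast_sum]
  refine congrArg (· / _) (Finset.sum_congr rfl fun z hz => ?_)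
  rw [Finset.filter_filter]
  congr 2
  exact Finset.filter_congr fun x _ => ⟨fun h => ⟨h ▸ hz, h⟩, fun h => h.2⟩

end Fibers

section BadPoints

variable {G : Type*} [AddCommGroup G]

def IsBad (F P : Finset G) (x : G) : Prop :=
  x + x ∈ F + F ∨ x ∈ (F ∪ P).image (fun w => w + w) - F

lemma card_filter_add_mem_image_double_le (s : Finset G) (f : G) :
    (s.filter (fun x => f + x ∈ s.image (fun w => w + w))).card
      ≤ (s.filter (fun w => w + w ∈ s)).card + (s.image (f + ·) \ s).card := by
  have hsub : (s.filter (fun x => f + x ∈ s.image (fun w => w + w))).image (f + ·)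
      ⊆ (s.filter (fun w => w + w ∈ s)).image (fun w => w + w) ∪ (s.image (f + ·) \ s) := by
    rintro _ hy
    obtain ⟨x, hx, rfl⟩ := Finset.mem_image.1 hy
    obtain ⟨hxs, hxD⟩ := Finset.mem_filter.1 hx
    obtain ⟨w, hws, hw⟩ := Finset.mem_image.1 hxD
    by_cases h : f + x ∈ s
    · exact Finset.mem_union_left _
        (Finset.mem_image.2 ⟨w, Finset.mem_filter.2 ⟨hws, hw ▸ h⟩, hw⟩)
    · exact Finset.mem_union_right _ (Finset.mem_sdiff.2 ⟨Finset.mem_image_of_mem _ hxs, h⟩)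
  calc _ = ((s.filter (fun x => f + x ∈ s.image (fun w => w + w))).image (f + ·)).card :=
        (Finset.card_image_of_injective _ (add_right_injective f)).symm
    _ ≤ _ := Finset.card_le_card hsub
    _ ≤ _ := (Finset.card_union_le _ _).trans (add_le_add_left Finset.card_image_le _)

lemma card_filter_isBad_le (F s : Finset G) :
    (s.filter (IsBad F s)).card ≤ (s.filter (fun x => x + x ∈ F + F)).card
      + (s.filter (· ∈ F.image (fun w => w + w) - F)).card
      + ∑ f ∈ F, ((s.filter (fun w => w + w ∈ s)).card + (s.image (f + ·) \ s).card) := by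
  have hsub : s.filter (IsBad F s) ⊆ s.filter (fun x => x + x ∈ F + F)
      ∪ s.filter (· ∈ F.image (fun w => w + w) - F)
      ∪ F.biUnion (fun f => s.filter (fun x => f + x ∈ s.image (fun w => w + w))) := by
    intro x hx
    obtain ⟨hxs, hdouble | hshift⟩ := Finset.mem_filter.1 hx
    · exact Finset.mem_union_left _ (Finset.mem_union_left _ (Finset.mem_filter.2 ⟨hxs, hdouble⟩))
    obtain ⟨d, hd, f, hf, rfl⟩ := Finset.mem_sub.1 hshift
    rw [Finset.image_union, Finset.mem_union] at hd
    rcases hd with hdF | hds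
    · exact Finset.mem_union_left _ (Finset.mem_union_right _
        (Finset.mem_filter.2 ⟨hxs, Finset.sub_mem_sub hdF hf⟩))
    · refine Finset.mem_union_right _ (Finset.mem_biUnion.2 ⟨f, hf, Finset.mem_filter.2 ⟨hxs, ?_⟩⟩)
      rwa [add_sub_cancel]
  refine (Finset.card_le_card hsub).trans ((Finset.card_union_le _ _).trans ?_)
  gcongr
  · exact Finset.card_union_le _ _
  · exact Finset.card_biUnion_le.trans
      (Finset.sum_le_sum fun f _ => card_filter_add_mem_image_double_le s f)

end BadPoints

lemma IsFolner.frequently_card_filter_isBad_lt {G : Type*} [AddCommGroup G] {Φ : ℕ → Finset G}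
    (hΦ : IsFolner Φ) (h2 : (Set.range (doubleHom G)).Infinite)
    (hr : liminf (fun N => (((Φ N).filter (fun x => x + x ∈ Φ N)).card : ℝ) / (Φ N).card)
      atTop = 0)
    (F : Finset G) {δ : ℝ} (hδ : 0 < δ) :
    ∃ᶠ N in atTop, (((Φ N).filter (IsBad F (Φ N))).card : ℝ) < δ * (Φ N).card := by
  set η := δ / (4 * (F.card + 1))
  have hη : 0 < η := by positivity
  have hηF : F.card * (2 * η) ≤ δ / 2 := by
    have : η * (4 * (F.card + 1)) = δ := div_mul_cancel₀ _ (by positivity)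
    nlinarith
  have hid : (Set.range (AddMonoidHom.id G)).Infinite := by
    rw [AddMonoidHom.coe_id, Set.range_id]
    exact h2.mono (Set.subset_univ _)
  have hfreq : ∃ᶠ N in atTop,
      (((Φ N).filter (fun x => x + x ∈ Φ N)).card : ℝ) / (Φ N).card < η :=
    frequently_lt_of_liminf_lt (isCoboundedUnder_ge_of_le _ (x := 1) fun N =>
      div_le_one_of_le₀ (by exact_mod_cast Finset.card_filter_le _ _) (by positivity)) (hr ▸ hη)
  have hdouble : ∀ᶠ N in atTop,
      (((Φ N).filter (fun x => x + x ∈ F + F)).card : ℝ) / (Φ N).card < δ / 4 :=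
    (hΦ.tendsto_card_filter_mem (doubleHom G) h2 (F + F)).eventually
      (eventually_lt_nhds (by positivity))
  have hfinite : ∀ᶠ N in atTop,
      (((Φ N).filter (· ∈ F.image (fun w => w + w) - F)).card : ℝ) / (Φ N).card < δ / 4 :=
    (hΦ.tendsto_card_filter_mem (AddMonoidHom.id G) hid (F.image (fun w => w + w) - F)).eventually
      (eventually_lt_nhds (by positivity))
  have hshift : ∀ᶠ N in atTop, ∀ f ∈ F,
      (((Φ N).image (f + ·) \ Φ N).card : ℝ) / (Φ N).card < η :=
    (Filter.eventually_all_finset F).2 fun f _ =>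
      (hΦ.tendsto_card_image_sdiff f).eventually (eventually_lt_nhds hη)
  refine (hfreq.and_eventually
    (hdouble.and (hfinite.and (hshift.and hΦ.eventually_card_pos)))).mono ?_
  rintro N ⟨hrN, hdN, hfN, hsN, hN⟩
  have hpos : (0 : ℝ) < (Φ N).card := by exact_mod_cast hN
  rw [div_lt_iff₀ hpos] at hrN hdN hfN
  have hsum : ∑ f ∈ F, ((((Φ N).filter (fun w => w + w ∈ Φ N)).card : ℝ)
      + (((Φ N).image (f + ·) \ Φ N).card : ℝ)) ≤ F.card * (2 * η) * (Φ N).card := by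
    calc _ ≤ ∑ _f ∈ F, 2 * η * ((Φ N).card : ℝ) := Finset.sum_le_sum fun f hf => by
          linarith [(div_lt_iff₀ hpos).1 (hsN f hf)]
      _ = _ := by rw [Finset.sum_const, nsmul_eq_mul]; ring
  have hbad := (Nat.cast_le (α := ℝ)).2 (card_filter_isBad_le F (Φ N))
  push_cast at hbad
  linarith [mul_le_mul_of_nonneg_right hηF hpos.le]

lemma exists_mem_later_of_infinite {α : Type*} {A : ℕ → Finset α} {S : Set α}
    (hS : S.Infinite) (hSA : S ⊆ ⋃ n, (A n : Set α)) (k : ℕ) :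
    ∃ y ∈ S, ∃ m, k < m ∧ y ∈ A m := by
  obtain ⟨y, hyS, hy⟩ := hS.exists_notMem_finite
    ((Set.finite_le_nat k).biUnion fun n _ => (A n).finite_toSet)
  obtain ⟨m, hm⟩ := Set.mem_iUnion.1 (hSA hyS)
  exact ⟨y, hyS, m, lt_of_not_ge fun hmk => hy (Set.mem_biUnion hmk hm), hm⟩

theorem not_singleton_add_add_subset_iUnion {G : Type*} [AddCommGroup G] {P F A : ℕ → Finset G}
    (hAF : ∀ {k n}, k < n → A k ⊆ F n) (hAP : ∀ n, A n ⊆ P n)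
    (hA : ∀ n, ∀ x ∈ A n, ¬ IsBad (F n) (P n) x) (t : G) {B : Set G} (hB : B.Infinite) :
    ¬ ({t} + B + B ⊆ ⋃ n, (A n : Set G)) := by
  intro hsub
  have hmem : ∀ {b b'}, b ∈ B → b' ∈ B → t + b + b' ∈ ⋃ n, (A n : Set G) := fun hb hb' =>
    hsub (Set.add_mem_add (Set.add_mem_add rfl hb) hb')
  have stage : ∀ {b b'}, b ∈ B → b' ∈ B → ∃ n, t + b + b' ∈ A n := fun hb hb' =>
    Set.mem_iUnion.1 (hmem hb hb')
  by_cases hD : ((fun b => t + b + b) '' B).Finite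
  · obtain ⟨a, hC⟩ : ∃ a, {b ∈ B | t + b + b = a}.Infinite := by
      by_contra! h
      exact hB ((hD.biUnion fun a _ => h a).subset fun b hb =>
        Set.mem_biUnion (Set.mem_image_of_mem _ hb) ⟨hb, rfl⟩)
    obtain ⟨b₀, hb₀B, hb₀⟩ := hC.nonempty
    obtain ⟨k, hak⟩ := stage hb₀B hb₀B
    rw [hb₀] at hak
    obtain ⟨_, ⟨b, ⟨-, hb⟩, rfl⟩, m, hkm, hm⟩ := exists_mem_later_of_infinite
      (hC.image (add_right_injective (t + b₀)).injOn)
      (Set.image_subset_iff.2 fun b hb => hmem hb₀B hb.1) k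
    refine hA m _ hm (Or.inl (Finset.mem_add.2 ⟨a, hAF hkm hak, a, hAF hkm hak, ?_⟩))
    nth_rw 1 [← hb₀]
    rw [← hb]
    beta_reduce
    abel
  · obtain ⟨b, hbB⟩ := hB.nonempty
    obtain ⟨k, hk⟩ := stage hbB hbB
    obtain ⟨_, ⟨b', hb'B, rfl⟩, k', hkk', hk'⟩ := exists_mem_later_of_infinite hD
      (Set.image_subset_iff.2 fun b hb => hmem hb hb) k
    obtain ⟨n, hn⟩ := stage hbB hb'B
    beta_reduce at hk'
    rcases lt_trichotomy n k' with hlt | rfl | hgt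
    · exact hA k' _ hk' (Or.inr (Finset.mem_sub.2 ⟨_, Finset.mem_image_of_mem _
        (Finset.mem_union_left _ (hAF hlt hn)), _, hAF hkk' hk, by abel⟩))
    · exact hA n _ hk' (Or.inr (Finset.mem_sub.2 ⟨_, Finset.mem_image_of_mem _
        (Finset.mem_union_right _ (hAP n hn)), _, hAF hkk' hk, by abel⟩))
    · exact hA n _ hn (Or.inl (Finset.mem_add.2
        ⟨_, hAF (hkk'.trans hgt) hk, _, hAF hgt hk', by abel⟩))

def accumulate {α : Type*} [DecidableEq α] (s : ℕ → Finset α → Finset α) : ℕ → Finset α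
  | 0 => ∅
  | n + 1 => accumulate s n ∪ s n (accumulate s n)

lemma subset_accumulate {α : Type*} [DecidableEq α] (s : ℕ → Finset α → Finset α) {k n : ℕ}
    (h : k < n) : s k (accumulate s k) ⊆ accumulate s n :=
  (Finset.subset_union_right : s k (accumulate s k) ⊆ accumulate s (k + 1)).trans
    (monotone_nat_of_le_succ (f := accumulate s) (fun _ => Finset.subset_union_left) h)

lemma limsup_eq_one_of_tendsto_comp {u : ℕ → ℝ} (hu0 : ∀ N, 0 ≤ u N) (hu1 : ∀ N, u N ≤ 1)
    {M : ℕ → ℕ} (hM : Tendsto M atTop atTop) (huM : Tendsto (u ∘ M) atTop (𝓝 1)) :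
    limsup u atTop = 1 := by
  refine le_antisymm (limsup_le_of_le (isCoboundedUnder_le_of_le atTop hu0)
    (Eventually.of_forall hu1)) (le_of_forall_lt_imp_le_of_dense fun c hc => ?_)
  refine le_limsup_of_frequently_le ?_ (isBoundedUnder_of ⟨1, hu1⟩)
  exact (hM.frequently (p := (c ≤ u ·))
    ((huM.eventually (lt_mem_nhds hc)).mono fun _ h => h.le).frequently)

lemma limsup_density_eq_one {α : Type*} {Φ : ℕ → Finset α} {A : Set α} {M : ℕ → ℕ}
    (hM : ∀ n, n ≤ M n) (hpos : ∀ n, 0 < (Φ (M n)).card)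
    (hA : ∀ n, (1 - 1 / (n + 1)) * ((Φ (M n)).card : ℝ) ≤ (A ∩ Φ (M n)).ncard) :
    limsup (fun N => ((A ∩ (Φ N : Set α)).ncard : ℝ) / (Φ N).card) atTop = 1 := by
  have hle (N : ℕ) : ((A ∩ (Φ N : Set α)).ncard : ℝ) / (Φ N).card ≤ 1 :=
    div_le_one_of_le₀ (Nat.cast_le.2 ((Set.ncard_inter_le_ncard_right _ _).trans_eq
      (Set.ncard_coe_finset _))) (by positivity)
  refine limsup_eq_one_of_tendsto_comp (fun _ => by positivity) hle
    (tendsto_atTop_mono hM tendsto_id) ?_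
  refine tendsto_of_tendsto_of_tendsto_of_le_of_le
    ((tendsto_const_nhds.sub tendsto_one_div_add_atTop_nhds_zero_nat).trans (by rw [sub_zero]))
    tendsto_const_nhds (fun n => ?_) (fun n => hle _)
  exact (le_div_iff₀ (Nat.cast_pos.2 (hpos n))).2 (hA n)

lemma card_sub_card_filter_le_ncard_inter {α : Type*} {A : Set α} {s : Finset α} {p : α → Prop}
    (h : ↑(s.filter (¬ p ·)) ⊆ A) : (s.card : ℝ) - (s.filter p).card ≤ (A ∩ s).ncard := by
  rw [← Finset.card_filter_add_card_filter_not p, Nat.cast_add, add_sub_cancel_left,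
    ← Set.ncard_coe_finset]
  exact_mod_cast Set.ncard_le_ncard
    (Set.subset_inter h (Finset.coe_subset.2 (Finset.filter_subset _ _)))
    (s.finite_toSet.inter_of_right A)

lemma ncard_preimage_double_inter {G : Type*} [AddCommGroup G] (s : Finset G) :
    (((fun x : G => x + x) ⁻¹' (s : Set G)) ∩ s).ncard = (s.filter (fun x => x + x ∈ s)).card := by
  rw [← Set.ncard_coe_finset, Finset.coe_filter, Set.inter_comm]
  rfl

theorem stmt19_general (G : Type*) [AddCommGroup G]
    (h2inf : (twoG G : Set G).Infinite)
    (Φ : ℕ → Finset G) (hΦ : IsFolner Φ)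
    (hnq : Filter.liminf (fun N =>
        (((((fun x : G => x + x) ⁻¹' (Φ N : Set G)) ∩ (Φ N : Set G)).ncard : ℝ) /
          ((Φ N).card : ℝ))) atTop = 0) :
    ∃ A : Set G,
      Filter.limsup (fun N => ((A ∩ (Φ N : Set G)).ncard : ℝ) / ((Φ N).card : ℝ))
        atTop = 1 ∧
      ∀ t : G, ∀ B : Set G, B.Infinite → ¬ (({t} : Set G) + B + B ⊆ A) := by
  simp only [ncard_preimage_double_inter] at hnq
  have hpick (n : ℕ) (F : Finset G) : ∃ N, n ≤ N ∧
      (((Φ N).filter (IsBad F (Φ N))).card : ℝ) < 1 / (n + 1) * (Φ N).card :=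
    ((hΦ.frequently_card_filter_isBad_lt h2inf hnq F (by positivity)).and_eventually
      (eventually_ge_atTop n)).exists.imp fun _ h => h.symm
  choose N hNn hNbad using hpick
  set F := accumulate fun n F => Φ (N n F)
  set M := fun n => N n (F n)
  set A := fun n => (Φ (M n)).filter (¬ IsBad (F n) (Φ (M n)) ·)
  have hpos (n : ℕ) : 0 < (Φ (M n)).card := by
    have := (Nat.cast_nonneg _).trans_lt (hNbad n (F n))
    exact_mod_cast pos_of_mul_pos_right this (by positivity)
  refine ⟨⋃ n, (A n : Set G), limsup_density_eq_one (fun n => hNn n (F n)) hpos fun n => ?_,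
    fun t B hB => not_singleton_add_add_subset_iUnion
      (fun h => (Finset.filter_subset _ _).trans (subset_accumulate _ h))
      (fun n => Finset.filter_subset _ _) (fun n _ hx => (Finset.mem_filter.1 hx).2) t hB⟩
  have := card_sub_card_filter_le_ncard_inter (Set.subset_iUnion (fun n => (A n : Set G)) n)
  linarith [hNbad n (F n)]

theorem stmt19 (G : Type*) [AddCommGroup G] [Countable G]
    (h2inf : (twoG G : Set G).Infinite)
    (Φ : ℕ → Finset G) (hΦ : IsFolner Φ)
    (hnq : Filter.liminf (fun N =>
        (((((fun x : G => x + x) ⁻¹' (Φ N : Set G)) ∩ (Φ N : Set G)).ncard : ℝ) /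
          ((Φ N).card : ℝ))) atTop = 0) :
    ∃ A : Set G,
      Filter.limsup (fun N => ((A ∩ (Φ N : Set G)).ncard : ℝ) / ((Φ N).card : ℝ))
        atTop = 1 ∧
      ∀ t : G, ∀ B : Set G, B.Infinite → ¬ (({t} : Set G) + B + B ⊆ A) :=
  stmt19_general G h2inf Φ hΦ hnq
end
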